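/- arXiv:1604.00635 — 8 statements merged into one kernel-verified Lean document; each statement's English description precedes it below -/
import Mathlib

section
/- Let A, X1, X2 be independent standard Gaussian random variables and let Y be a random variable with mean 0, independent of A, X1, X2. Fix real constants a_B, b_B, e_B, a_E, b_E with (a_E, b_E) ≠ (0,0), and define B := a_B·A + Y + b_B·X1 + e_B, E := a_E·A + b_E·X2, and E' := (a_B·a_E/(a_E² + b_E²))·E + Y. Then B − E' − e_B is a centered Gaussian random variable with variance a_B²·b_E²/(a_E² + b_E²) + b_B², independent of the pair (E, Y). Consequently, the conditional distribution of B given (E, Y) = (e, y) depends only on e' := (a_B·a_E/(a_E² + b_E²))·e + y and is the Gaussian distribution with mean e' + e_B and variance a_B²·b_E²/(a_E² + b_E²) + b_B². -/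
open MeasureTheory ProbabilityTheory Real
open scoped NNReal ENNReal

namespace StmtAux

lemma prod_gauss_withDensity :
    ((gaussianReal 0 1).prod (gaussianReal 0 1)) =
      (volume : Measure (ℝ × ℝ)).withDensity
        (fun x => gaussianPDF 0 1 x.1 * gaussianPDF 0 1 x.2) := by
  refine (Measure.prod_eq fun s t hs ht => ?_)
  rw [withDensity_apply _ (hs.prod ht), Measure.volume_eq_prod,
    ← Measure.prod_restrict, lintegral_prod_mul
      (measurable_gaussianPDF 0 1).aemeasurable (measurable_gaussianPDF 0 1).aemeasurable,
    gaussianReal_of_var_ne_zero 0 one_ne_zero,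
    withDensity_apply _ hs, withDensity_apply _ ht]

lemma map_rot_volume (p q : ℝ) (h : p ^ 2 + q ^ 2 = 1) :
    Measure.map (fun x : ℝ × ℝ => (p * x.1 + q * x.2, -q * x.1 + p * x.2))
      (volume : Measure (ℝ × ℝ)) = volume := by
  set L := Matrix.toLin (Module.Basis.finTwoProd ℝ) (Module.Basis.finTwoProd ℝ) !![p, q; -q, p] with hL
  have hdet : LinearMap.det L = 1 := by
    rw [hL, LinearMap.det_toLin]
    rw [Matrix.det_fin_two_of]
    nlinarith [h]
  have hcoe : ⇑L = fun x : ℝ × ℝ => (p * x.1 + q * x.2, -q * x.1 + p * x.2) := by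
    funext x
    exact Matrix.toLin_finTwoProd_apply p q (-q) p x
  have := MeasureTheory.Measure.map_linearMap_addHaar_eq_smul_addHaar
    (volume : Measure (ℝ × ℝ)) (f := L) (by rw [hdet]; norm_num)
  rw [hcoe] at this
  rw [this, hdet]
  norm_num

lemma pdf_rot (p q : ℝ) (h : p ^ 2 + q ^ 2 = 1) (x : ℝ × ℝ) :
    gaussianPDF 0 1 (p * x.1 + q * x.2) * gaussianPDF 0 1 (-q * x.1 + p * x.2)
      = gaussianPDF 0 1 x.1 * gaussianPDF 0 1 x.2 := by
  have hnn : ∀ y : ℝ, 0 ≤ gaussianPDFReal 0 1 y := fun y => gaussianPDFReal_nonneg 0 1 y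
  simp only [gaussianPDF]
  rw [← ENNReal.ofReal_mul (hnn _), ← ENNReal.ofReal_mul (hnn _)]
  congr 1
  simp only [gaussianPDFReal, NNReal.coe_one, mul_one, sub_zero]
  rw [mul_mul_mul_comm, ← Real.exp_add, mul_mul_mul_comm, ← Real.exp_add]
  congr 1
  have : (p * x.1 + q * x.2) ^ 2 + (-q * x.1 + p * x.2) ^ 2 = x.1 ^ 2 + x.2 ^ 2 := by
    nlinarith [h]
  field_simp
  congr 1
  linear_combination (-1/2 : ℝ) * this

lemma map_rot_gauss (p q : ℝ) (h : p ^ 2 + q ^ 2 = 1) :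
    Measure.map (fun x : ℝ × ℝ => (p * x.1 + q * x.2, -q * x.1 + p * x.2))
      ((gaussianReal 0 1).prod (gaussianReal 0 1)) = (gaussianReal 0 1).prod (gaussianReal 0 1) := by
  have hT : Measurable (fun x : ℝ × ℝ => (p * x.1 + q * x.2, -q * x.1 + p * x.2)) := by
    fun_prop
  have hG : Measurable (fun x : ℝ × ℝ => gaussianPDF 0 1 x.1 * gaussianPDF 0 1 x.2) :=
    ((measurable_gaussianPDF 0 1).comp measurable_fst).mul
      ((measurable_gaussianPDF 0 1).comp measurable_snd)
  have mp : MeasurePreserving (fun x : ℝ × ℝ => (p * x.1 + q * x.2, -q * x.1 + p * x.2))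
      (volume : Measure (ℝ × ℝ)) volume := ⟨hT, map_rot_volume p q h⟩
  rw [prod_gauss_withDensity]
  ext s hs
  rw [Measure.map_apply hT hs, withDensity_apply _ (hT hs), withDensity_apply _ hs,
    ← lintegral_indicator (hT hs) _, ← lintegral_indicator hs _]
  have : ∀ x : ℝ × ℝ,
      ((fun x : ℝ × ℝ => (p * x.1 + q * x.2, -q * x.1 + p * x.2)) ⁻¹' s).indicator
        (fun x : ℝ × ℝ => gaussianPDF 0 1 x.1 * gaussianPDF 0 1 x.2) x
      = s.indicator (fun x : ℝ × ℝ => gaussianPDF 0 1 x.1 * gaussianPDF 0 1 x.2)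
          ((p * x.1 + q * x.2, -q * x.1 + p * x.2)) := by
    intro x
    classical
    rw [Set.indicator_apply, Set.indicator_apply]
    simp only [Set.mem_preimage]
    split_ifs with hx
    · exact (pdf_rot p q h x).symm
    · rfl
  simp_rw [this]
  exact mp.lintegral_comp (hG.indicator hs)

lemma gauss_map_smul (c : ℝ) (v : ℝ≥0) :
    (gaussianReal 0 v).map (fun x => c * x) = gaussianReal 0 (Real.toNNReal (c ^ 2) * v) := by
  have h := gaussianReal_map_const_mul (μ := 0) (v := v) c
  simp only [mul_zero] at h
  have h2 : (⟨c ^ 2, sq_nonneg _⟩ : ℝ≥0) = Real.toNNReal (c ^ 2) := by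
    refine NNReal.coe_injective ?_
    simp [Real.coe_toNNReal _ (sq_nonneg c)]
    rfl
  rw [← h2]
  exact h

lemma gauss_sum (v1 v2 : ℝ≥0) :
    Measure.map (fun x : ℝ × ℝ => x.1 + x.2) ((gaussianReal 0 v1).prod (gaussianReal 0 v2))
      = gaussianReal 0 (v1 + v2) := by
  rcases eq_or_ne (v1 + v2) 0 with h0 | h0
  · obtain ⟨h1, h2⟩ := add_eq_zero.mp h0
    rw [h1, h2, gaussianReal_zero_var, Measure.dirac_prod_dirac,
      Measure.map_dirac' (by fun_prop), show (0:ℝ≥0) + 0 = 0 by norm_num, gaussianReal_zero_var]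
    norm_num
  · have hpos : (0:ℝ) < (v1:ℝ) + (v2:ℝ) := by
      rcases (lt_or_eq_of_le (zero_le : 0 ≤ v1 + v2)) with h | h
      · exact_mod_cast h
      · exact absurd h.symm h0
    set r : ℝ := Real.sqrt ((v1:ℝ) + (v2:ℝ)) with hrdef
    have hr : 0 < r := Real.sqrt_pos.mpr hpos
    have hr2 : r ^ 2 = (v1:ℝ) + (v2:ℝ) := Real.sq_sqrt hpos.le
    set p : ℝ := Real.sqrt v1 / r
    set q : ℝ := Real.sqrt v2 / r
    have hp2 : p ^ 2 = (v1:ℝ) / ((v1:ℝ) + (v2:ℝ)) := by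
      simp only [p, div_pow, hr2, Real.sq_sqrt (v1.coe_nonneg)]
    have hq2 : q ^ 2 = (v2:ℝ) / ((v1:ℝ) + (v2:ℝ)) := by
      simp only [q, div_pow, hr2, Real.sq_sqrt (v2.coe_nonneg)]
    have hpq : p ^ 2 + q ^ 2 = 1 := by
      rw [hp2, hq2, ← add_div, div_self hpos.ne']
    have e1 : gaussianReal 0 v1 = (gaussianReal 0 1).map (fun x => Real.sqrt v1 * x) := by
      rw [gauss_map_smul, Real.sq_sqrt (v1.coe_nonneg), mul_one, Real.toNNReal_coe]
    have e2 : gaussianReal 0 v2 = (gaussianReal 0 1).map (fun x => Real.sqrt v2 * x) := by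
      rw [gauss_map_smul, Real.sq_sqrt (v2.coe_nonneg), mul_one, Real.toNNReal_coe]
    rw [e1, e2, Measure.map_prod_map _ _ (by fun_prop) (by fun_prop),
      Measure.map_map (by fun_prop) (by fun_prop)]
    have key : ((fun x : ℝ × ℝ => x.1 + x.2) ∘
          Prod.map (fun x => Real.sqrt v1 * x) (fun x => Real.sqrt v2 * x))
        = (fun y : ℝ => r * y) ∘ Prod.fst ∘
          (fun x : ℝ × ℝ => (p * x.1 + q * x.2, -q * x.1 + p * x.2)) := by
      funext x
      simp only [Function.comp_apply, Prod.map_apply, Prod.map_fst, Prod.map_snd]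
      simp only [p, q]
      have hrr : r * r⁻¹ = 1 := mul_inv_cancel₀ hr.ne'
      linear_combination (-(Real.sqrt v1 * x.1 + Real.sqrt v2 * x.2)) * hrr
    rw [key, ← Function.comp_assoc, ← Measure.map_map (by fun_prop) (by fun_prop),
      map_rot_gauss p q hpq, ← Measure.map_map (by fun_prop) measurable_fst,
      Measure.map_fst_prod, measure_univ, one_smul, gauss_map_smul]
    congr 1
    rw [mul_one]
    refine NNReal.coe_injective ?_
    rw [Real.coe_toNNReal _ (sq_nonneg r), hr2]
    norm_num

lemma lin_comb {Ω : Type*} [MeasurableSpace Ω] {μ : Measure Ω} [IsProbabilityMeasure μ]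
    {X Z : Ω → ℝ} (hX : Measurable X) (hZ : Measurable Z)
    (hi : IndepFun X Z μ) (hXl : μ.map X = gaussianReal 0 1) (hZl : μ.map Z = gaussianReal 0 1)
    (c d : ℝ) :
    μ.map (fun ω => c * X ω + d * Z ω) = gaussianReal 0 (Real.toNNReal (c ^ 2 + d ^ 2)) := by
  have hmap : μ.map (fun ω => (X ω, Z ω)) = (gaussianReal 0 1).prod (gaussianReal 0 1) := by
    rw [(indepFun_iff_map_prod_eq_prod_map_map hX.aemeasurable hZ.aemeasurable).mp hi, hXl, hZl]
  have h1 : (fun ω => c * X ω + d * Z ω)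
      = (fun x : ℝ × ℝ => c * x.1 + d * x.2) ∘ (fun ω => (X ω, Z ω)) := rfl
  rw [h1, ← Measure.map_map (by fun_prop) (hX.prodMk hZ), hmap]
  have h2 : (fun x : ℝ × ℝ => c * x.1 + d * x.2)
      = (fun x : ℝ × ℝ => x.1 + x.2) ∘ (Prod.map (fun x => c * x) (fun x => d * x)) := rfl
  rw [h2, ← Measure.map_map (by fun_prop) (by fun_prop),
    ← Measure.map_prod_map _ _ (by fun_prop) (by fun_prop),
    gauss_map_smul, gauss_map_smul, gauss_sum]
  congr 1
  rw [mul_one, mul_one, ← Real.toNNReal_add (sq_nonneg c) (sq_nonneg d)]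

lemma measurable_gaussianReal_mean (w : ℝ≥0) : Measurable (fun m : ℝ => gaussianReal m w) := by
  refine Measure.measurable_measure.mpr fun t ht => ?_
  classical
  have hmap : ∀ m : ℝ, gaussianReal m w t
      = ∫⁻ x, t.indicator (fun _ => (1:ℝ≥0∞)) (x + m) ∂(gaussianReal 0 w) := by
    intro m
    have h1 : gaussianReal m w = (gaussianReal 0 w).map (· + m) := by
      rw [gaussianReal_map_add_const, zero_add]
    rw [h1, Measure.map_apply (by fun_prop) ht,
      ← lintegral_indicator_one ((by fun_prop : Measurable (· + m)) ht)]
    refine lintegral_congr fun x => ?_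
    by_cases hx : x + m ∈ t <;> simp [Set.indicator_apply, Set.mem_preimage, hx]
  simp_rw [hmap]
  have hmeas : Measurable (fun q : ℝ × ℝ => t.indicator (fun _ => (1:ℝ≥0∞)) (q.2 + q.1)) :=
    (measurable_const.indicator ht).comp (measurable_snd.add measurable_fst)
  exact hmeas.lintegral_prod_right'

noncomputable def gaussKernel (w : ℝ≥0) : ProbabilityTheory.Kernel ℝ ℝ :=
  { toFun := fun m => gaussianReal m w
    measurable' := measurable_gaussianReal_mean w }

lemma gaussKernel_apply (w : ℝ≥0) (m : ℝ) : gaussKernel w m = gaussianReal m w := rfl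

instance (w : ℝ≥0) : IsMarkovKernel (gaussKernel w) :=
  ⟨fun m => by rw [gaussKernel_apply]; infer_instance⟩

lemma map_add_comp_eq_compProd {α : Type*} [MeasurableSpace α] (ν : Measure α)
    [IsProbabilityMeasure ν] (w : ℝ≥0) (f : α → ℝ) (hf : Measurable f) :
    Measure.map (fun z : α × ℝ => (z.1, z.2 + f z.1)) (ν.prod (gaussianReal 0 w))
      = ν ⊗ₘ ((gaussKernel w).comap f hf) := by
  have hΦ : Measurable (fun z : α × ℝ => (z.1, z.2 + f z.1)) := by fun_prop
  have hprob : IsProbabilityMeasure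
      (Measure.map (fun z : α × ℝ => (z.1, z.2 + f z.1)) (ν.prod (gaussianReal 0 w))) :=
    Measure.isProbabilityMeasure_map hΦ.aemeasurable
  refine MeasureTheory.ext_of_generate_finite _ generateFrom_prod.symm isPiSystem_prod ?_ ?_
  · rintro u ⟨s, hs, t, ht, rfl⟩
    replace hs : MeasurableSet s := hs
    replace ht : MeasurableSet t := ht
    rw [Measure.map_apply hΦ (hs.prod ht), Measure.compProd_apply (hs.prod ht),
      Measure.prod_apply (hΦ (hs.prod ht))]
    refine lintegral_congr fun z => ?_
    by_cases hz : z ∈ s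
    · have hset : (Prod.mk z ⁻¹' ((fun z : α × ℝ => (z.1, z.2 + f z.1)) ⁻¹' s ×ˢ t))
          = (fun g : ℝ => g + f z) ⁻¹' t := by
        ext g; simp [hz]
      have hset2 : Prod.mk z ⁻¹' s ×ˢ t = t := by ext g; simp [hz]
      have hmg : gaussianReal (f z) w = (gaussianReal 0 w).map (· + f z) := by
        rw [gaussianReal_map_add_const, zero_add]
      rw [hset, hset2, Kernel.comap_apply, gaussKernel_apply, hmg,
        Measure.map_apply (by fun_prop) ht]
    · have hset : (Prod.mk z ⁻¹' ((fun z : α × ℝ => (z.1, z.2 + f z.1)) ⁻¹' s ×ˢ t))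
          = ∅ := by ext g; simp [hz]
      have hset2 : Prod.mk z ⁻¹' s ×ˢ t = (∅ : Set ℝ) := by ext g; simp [hz]
      rw [hset, hset2]
      simp
  · simp only [measure_univ]

lemma mp_shuffle {α₁ α₂ α₃ α₄ : Type*} [MeasurableSpace α₁] [MeasurableSpace α₂]
    [MeasurableSpace α₃] [MeasurableSpace α₄]
    (μ1 : Measure α₁) (μ2 : Measure α₂) (μ3 : Measure α₃) (μ4 : Measure α₄)
    [IsProbabilityMeasure μ1] [IsProbabilityMeasure μ2] [IsProbabilityMeasure μ3]
    [IsProbabilityMeasure μ4] :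
    MeasurePreserving (fun z : (α₁ × α₂) × (α₃ × α₄) => ((z.1.2, z.2.1), (z.1.1, z.2.2)))
      ((μ1.prod μ2).prod (μ3.prod μ4)) ((μ2.prod μ3).prod (μ1.prod μ4)) := by
  have e1 : MeasurePreserving (Prod.map (Prod.swap : α₁ × α₂ → α₂ × α₁) (id : α₃ × α₄ → α₃ × α₄))
      ((μ1.prod μ2).prod (μ3.prod μ4)) ((μ2.prod μ1).prod (μ3.prod μ4)) :=
    Measure.measurePreserving_swap.prod (MeasurePreserving.id _)
  have e2 := MeasureTheory.measurePreserving_prodAssoc μ2 μ1 (μ3.prod μ4)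
  have ia := (MeasureTheory.measurePreserving_prodAssoc μ1 μ3 μ4).symm
      (MeasurableEquiv.prodAssoc)
  have ib : MeasurePreserving (Prod.map (Prod.swap : α₁ × α₃ → α₃ × α₁) (id : α₄ → α₄))
      ((μ1.prod μ3).prod μ4) ((μ3.prod μ1).prod μ4) :=
    Measure.measurePreserving_swap.prod (MeasurePreserving.id _)
  have ic := MeasureTheory.measurePreserving_prodAssoc μ3 μ1 μ4
  have inner : MeasurePreserving
      (⇑MeasurableEquiv.prodAssoc ∘ (Prod.map Prod.swap id) ∘ ⇑MeasurableEquiv.prodAssoc.symm)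
      (μ1.prod (μ3.prod μ4)) (μ3.prod (μ1.prod μ4)) := ic.comp (ib.comp ia)
  have e3 : MeasurePreserving (Prod.map (id : α₂ → α₂)
      (⇑MeasurableEquiv.prodAssoc ∘ (Prod.map Prod.swap id) ∘ ⇑MeasurableEquiv.prodAssoc.symm))
      (μ2.prod (μ1.prod (μ3.prod μ4))) (μ2.prod (μ3.prod (μ1.prod μ4))) :=
    (MeasurePreserving.id _).prod inner
  have e4 := (MeasureTheory.measurePreserving_prodAssoc μ2 μ3 (μ1.prod μ4)).symm
      (MeasurableEquiv.prodAssoc)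
  have total := e4.comp (e3.comp (e2.comp e1))
  have hfun : (fun z : (α₁ × α₂) × (α₃ × α₄) => ((z.1.2, z.2.1), (z.1.1, z.2.2)))
      = ⇑MeasurableEquiv.prodAssoc.symm ∘ ((Prod.map (id : α₂ → α₂)
        (⇑MeasurableEquiv.prodAssoc ∘ (Prod.map Prod.swap id) ∘ ⇑MeasurableEquiv.prodAssoc.symm))
      ∘ (⇑MeasurableEquiv.prodAssoc ∘ (Prod.map (Prod.swap : α₁ × α₂ → α₂ × α₁)
        (id : α₃ × α₄ → α₃ × α₄)))) := by
    funext z; rfl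
  rw [hfun]
  exact total

end StmtAux

open StmtAux

/-- Reduction of the noise injecting attack: `B − E' − e_B` is a centered Gaussian with
variance `a_B²·b_E²/(a_E²+b_E²) + b_B²` independent of `(E, Y)`, and the conditional
distribution of `B` given `(E, Y) = (e, y)` is the Gaussian with mean
`(a_B·a_E/(a_E²+b_E²))·e + y + e_B` and that variance. -/
theorem stmt_0 {Ω : Type*} [MeasurableSpace Ω] (μ : Measure Ω) [IsProbabilityMeasure μ]
    (A X1 X2 Y : Ω → ℝ)
    (hA : Measurable A) (hX1 : Measurable X1) (hX2 : Measurable X2) (hY : Measurable Y)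
    (hindep : iIndepFun ![A, X1, X2, Y] μ)
    (hAlaw : μ.map A = gaussianReal 0 1)
    (hX1law : μ.map X1 = gaussianReal 0 1)
    (hX2law : μ.map X2 = gaussianReal 0 1)
    (hYint : Integrable Y μ) (hYmean : μ[Y] = 0)
    (a_B b_B e_B a_E b_E : ℝ) (hne : (a_E, b_E) ≠ (0, 0))
    (B E E' : Ω → ℝ)
    (hB : B = fun ω => a_B * A ω + Y ω + b_B * X1 ω + e_B)
    (hE : E = fun ω => a_E * A ω + b_E * X2 ω)
    (hE' : E' = fun ω => (a_B * a_E / (a_E ^ 2 + b_E ^ 2)) * E ω + Y ω) :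
    μ.map (fun ω => B ω - E' ω - e_B)
      = gaussianReal 0 (Real.toNNReal (a_B ^ 2 * b_E ^ 2 / (a_E ^ 2 + b_E ^ 2) + b_B ^ 2))
    ∧ IndepFun (fun ω => B ω - E' ω - e_B) (fun ω => (E ω, Y ω)) μ
    ∧ ∀ᵐ p ∂(μ.map (fun ω => (E ω, Y ω))),
        condDistrib B (fun ω => (E ω, Y ω)) μ p
          = gaussianReal ((a_B * a_E / (a_E ^ 2 + b_E ^ 2)) * p.1 + p.2 + e_B)
              (Real.toNNReal (a_B ^ 2 * b_E ^ 2 / (a_E ^ 2 + b_E ^ 2) + b_B ^ 2)) := by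
  have hmf : ∀ i, Measurable (![A, X1, X2, Y] i) := by
    intro i; fin_cases i <;> assumption
  set s : ℝ := a_E ^ 2 + b_E ^ 2 with hs_def
  have hs : 0 < s := by
    have hor : a_E ≠ 0 ∨ b_E ≠ 0 := by
      by_contra hcon
      push_neg at hcon
      exact hne (by simp [hcon.1, hcon.2])
    rcases hor with h | h <;> positivity
  have hs0 : s ≠ 0 := hs.ne'
  set r : ℝ := Real.sqrt s with hr_def
  have hr : 0 < r := Real.sqrt_pos.mpr hs
  have hr0 : r ≠ 0 := hr.ne'
  have hr2 : r ^ 2 = s := Real.sq_sqrt hs.le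
  set p : ℝ := a_E / r with hp_def
  set q : ℝ := b_E / r with hq_def
  have hpq : p ^ 2 + q ^ 2 = 1 := by
    rw [hp_def, hq_def, div_pow, div_pow, ← add_div, hr2]
    exact div_self hs0
  set c : ℝ := a_B * a_E / s with hc_def
  set β : ℝ := -(a_B * b_E) / r with hβ_def
  set U : Ω → ℝ := fun ω => p * A ω + q * X2 ω with hU_def
  set V : Ω → ℝ := fun ω => -q * A ω + p * X2 ω with hV_def
  have hUm : Measurable U := by fun_prop
  have hVm : Measurable V := by fun_prop
  have hBm : Measurable B := by rw [hB]; fun_prop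
  have hEm : Measurable E := by rw [hE]; fun_prop
  set T : ℝ × ℝ → ℝ × ℝ := fun x => (p * x.1 + q * x.2, -q * x.1 + p * x.2) with hT_def
  have hTm : Measurable T := by fun_prop
  set γ : Measure ℝ := gaussianReal 0 1 with hγ_def
  set ζ : Measure ℝ := μ.map Y with hζ_def
  have hζp : IsProbabilityMeasure ζ := Measure.isProbabilityMeasure_map hY.aemeasurable
  -- independence of pairs
  have h1 : IndepFun (fun ω => (A ω, X2 ω)) (fun ω => (X1 ω, Y ω)) μ :=
    hindep.indepFun_prodMk_prodMk hmf 0 2 1 3 (by decide) (by decide) (by decide) (by decide)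
  have hAX2 : μ.map (fun ω => (A ω, X2 ω)) = γ.prod γ := by
    have hi : IndepFun A X2 μ := hindep.indepFun (show (0 : Fin 4) ≠ 2 by decide)
    rw [(indepFun_iff_map_prod_eq_prod_map_map hA.aemeasurable hX2.aemeasurable).mp hi,
      hAlaw, hX2law]
  have hUV : μ.map (fun ω => (U ω, V ω)) = γ.prod γ := by
    have hcomp : (fun ω => (U ω, V ω)) = T ∘ (fun ω => (A ω, X2 ω)) := rfl
    rw [hcomp, ← Measure.map_map hTm (hA.prodMk hX2), hAX2, hγ_def, hT_def,
      map_rot_gauss p q hpq]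
  have hX1Y : μ.map (fun ω => (X1 ω, Y ω)) = γ.prod ζ := by
    have hi : IndepFun X1 Y μ := hindep.indepFun (show (1 : Fin 4) ≠ 3 by decide)
    rw [(indepFun_iff_map_prod_eq_prod_map_map hX1.aemeasurable hY.aemeasurable).mp hi, hX1law]
  have h2 : IndepFun (fun ω => (U ω, V ω)) (fun ω => (X1 ω, Y ω)) μ :=
    h1.comp hTm measurable_id
  have hjoint1 : μ.map (fun ω => ((U ω, V ω), (X1 ω, Y ω))) = (γ.prod γ).prod (γ.prod ζ) := by
    rw [(indepFun_iff_map_prod_eq_prod_map_map ((hUm.prodMk hVm).aemeasurable)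
      ((hX1.prodMk hY).aemeasurable)).mp h2, hUV, hX1Y]
  have hU_law : μ.map U = γ := by
    have hcomp : U = Prod.fst ∘ (fun ω => (U ω, V ω)) := rfl
    rw [hcomp, ← Measure.map_map measurable_fst (hUm.prodMk hVm), hUV,
      Measure.map_fst_prod, measure_univ, one_smul]
  have hV_law : μ.map V = γ := by
    have hcomp : V = Prod.snd ∘ (fun ω => (U ω, V ω)) := rfl
    rw [hcomp, ← Measure.map_map measurable_snd (hUm.prodMk hVm), hUV,
      Measure.map_snd_prod, measure_univ, one_smul]
  have hVX1_indep : IndepFun V X1 μ := h2.comp measurable_snd measurable_fst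
  have hUY_indep : IndepFun U Y μ := h2.comp measurable_fst measurable_snd
  have hVX1 : μ.map (fun ω => (V ω, X1 ω)) = γ.prod γ := by
    rw [(indepFun_iff_map_prod_eq_prod_map_map hVm.aemeasurable hX1.aemeasurable).mp hVX1_indep,
      hV_law, hX1law]
  have hUY : μ.map (fun ω => (U ω, Y ω)) = γ.prod ζ := by
    rw [(indepFun_iff_map_prod_eq_prod_map_map hUm.aemeasurable hY.aemeasurable).mp hUY_indep,
      hU_law]
  have hjoint2 : μ.map (fun ω => ((V ω, X1 ω), (U ω, Y ω))) = (γ.prod γ).prod (γ.prod ζ) := by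
    have hcomp : (fun ω => ((V ω, X1 ω), (U ω, Y ω)))
        = (fun z : (ℝ × ℝ) × (ℝ × ℝ) => ((z.1.2, z.2.1), (z.1.1, z.2.2)))
          ∘ (fun ω => ((U ω, V ω), (X1 ω, Y ω))) := rfl
    rw [hcomp, ← Measure.map_map (mp_shuffle γ γ γ ζ).measurable
      ((hUm.prodMk hVm).prodMk (hX1.prodMk hY)), hjoint1, (mp_shuffle γ γ γ ζ).map_eq]
  have hbig : IndepFun (fun ω => (V ω, X1 ω)) (fun ω => (U ω, Y ω)) μ := by
    refine (indepFun_iff_map_prod_eq_prod_map_map ((hVm.prodMk hX1).aemeasurable)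
      ((hUm.prodMk hY).aemeasurable)).mpr ?_
    rw [hjoint2, hVX1, hUY]
  -- pointwise identities
  have hGfun : (fun ω => B ω - E' ω - e_B)
      = (fun x : ℝ × ℝ => β * x.1 + b_B * x.2) ∘ (fun ω => (V ω, X1 ω)) := by
    funext ω
    simp only [hB, hE', hE, Function.comp_apply, hV_def, hβ_def, hc_def, hp_def, hq_def]
    have h := hr2
    rw [hs_def] at h ⊢
    have hinv : r⁻¹ ^ 2 = (a_E ^ 2 + b_E ^ 2)⁻¹ := by rw [inv_pow, h]
    have hss : (a_E ^ 2 + b_E ^ 2) * (a_E ^ 2 + b_E ^ 2)⁻¹ = 1 :=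
      mul_inv_cancel₀ (by rw [← hs_def]; exact hs0)
    linear_combination (-a_B * b_E ^ 2 * A ω + a_B * b_E * a_E * X2 ω) * hinv + (-a_B * A ω) * hss
  have hEfun : (fun ω => (E ω, Y ω))
      = (fun x : ℝ × ℝ => (r * x.1, x.2)) ∘ (fun ω => (U ω, Y ω)) := by
    funext ω
    simp only [hE, Function.comp_apply, hU_def, hp_def, hq_def]
    have : r * (a_E / r * A ω + b_E / r * X2 ω) = a_E * A ω + b_E * X2 ω := by
      field_simp
    rw [this]
  have hβsq : Real.toNNReal (β ^ 2 + b_B ^ 2)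
      = Real.toNNReal (a_B ^ 2 * b_E ^ 2 / s + b_B ^ 2) := by
    congr 1
    rw [hβ_def, div_pow, hr2]
    ring_nf
  -- Part 1 : law of G
  have hGlaw : μ.map (fun ω => B ω - E' ω - e_B)
      = gaussianReal 0 (Real.toNNReal (a_B ^ 2 * b_E ^ 2 / s + b_B ^ 2)) := by
    rw [hGfun, ← hβsq]
    exact lin_comb hVm hX1 hVX1_indep hV_law hX1law β b_B
  refine ⟨hGlaw, ?_, ?_⟩
  -- Part 2 : independence
  · have hcomp := hbig.comp (φ := fun x : ℝ × ℝ => β * x.1 + b_B * x.2)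
      (ψ := fun x : ℝ × ℝ => (r * x.1, x.2)) (by fun_prop) (by fun_prop)
    rw [hGfun, hEfun]
    exact hcomp
  -- Part 3 : conditional distribution
  · have hGE_indep : IndepFun (fun ω => B ω - E' ω - e_B) (fun ω => (E ω, Y ω)) μ := by
      have hcomp := hbig.comp (φ := fun x : ℝ × ℝ => β * x.1 + b_B * x.2)
        (ψ := fun x : ℝ × ℝ => (r * x.1, x.2)) (by fun_prop) (by fun_prop)
      rw [hGfun, hEfun]
      exact hcomp
    set w : ℝ≥0 := Real.toNNReal (a_B ^ 2 * b_E ^ 2 / s + b_B ^ 2) with hw_def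
    set Zf : Ω → ℝ × ℝ := fun ω => (E ω, Y ω) with hZf_def
    have hZm : Measurable Zf := hEm.prodMk hY
    set f : ℝ × ℝ → ℝ := fun x => c * x.1 + x.2 + e_B with hf_def
    have hfm : Measurable f := by fun_prop
    have hν : IsProbabilityMeasure (μ.map Zf) := Measure.isProbabilityMeasure_map hZm.aemeasurable
    have hZB : (fun ω => (Zf ω, B ω))
        = (fun z : (ℝ × ℝ) × ℝ => (z.1, z.2 + f z.1))
          ∘ (fun ω => (Zf ω, B ω - E' ω - e_B)) := by
      funext ω
      simp only [Function.comp_apply, hZf_def, hf_def, hE']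
      have : B ω - ((a_B * a_E / s) * E ω + Y ω) - e_B + (c * E ω + Y ω + e_B) = B ω := by
        rw [hc_def]; ring
      rw [this]
    have hmapZG : μ.map (fun ω => (Zf ω, B ω - E' ω - e_B))
        = (μ.map Zf).prod (gaussianReal 0 w) := by
      have hGm : Measurable (fun ω => B ω - E' ω - e_B) := by
        rw [hE']; fun_prop
      rw [(indepFun_iff_map_prod_eq_prod_map_map hZm.aemeasurable hGm.aemeasurable).mp
        hGE_indep.symm, hGlaw]
    have hcompProd : μ.map (fun ω => (Zf ω, B ω))
        = (μ.map Zf) ⊗ₘ ((gaussKernel w).comap f hfm) := by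
      have hGm : Measurable (fun ω => B ω - E' ω - e_B) := by
        rw [hE']; fun_prop
      rw [hZB, ← Measure.map_map (by fun_prop) (hZm.prodMk hGm), hmapZG,
        map_add_comp_eq_compProd (μ.map Zf) w f hfm]
    have huniq := condDistrib_ae_eq_of_measure_eq_compProd Zf hBm.aemeasurable
      (κ := (gaussKernel w).comap f hfm) hcompProd
    filter_upwards [huniq] with x hx
    rw [hx, Kernel.comap_apply, gaussKernel_apply, hf_def]
end

section
/- Let A, X1, X2 be independent standard Gaussian random variables and Y a centered Gaussian random variable with variance v_Y > 0, independent of A, X1, X2. Let a_B, b_B, a_E, b_E be nonzero real constants and e_B a real constant. Set B := a_B·A + Y + b_B·X1 + e_B, E := a_E·A + b_E·X2, and E' := (a_B·a_E/(a_E² + b_E²))·E + Y. Then the squared correlation coefficient between E' and B equals (a_B²·a_E²/(a_E² + b_E²) + v_Y)/(a_B² + v_Y + b_B²); moreover Var(E') = Cov(E', B) = a_B²·a_E²/(a_E² + b_E²) + v_Y. -/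
open MeasureTheory ProbabilityTheory Real Filter Topology Asymptotics
open scoped NNReal ENNReal

/-- Covariance of two real random variables. -/
noncomputable def cov {Ω : Type*} [MeasurableSpace Ω] (X Y : Ω → ℝ) (μ : Measure Ω) : ℝ :=
  ∫ ω, (X ω - ∫ ω', X ω' ∂μ) * (Y ω - ∫ ω', Y ω' ∂μ) ∂μ


section GaussMoments

lemma tendsto_mul_exp_atTop' {b : ℝ} (hb : 0 < b) :
    Tendsto (fun x : ℝ => x * rexp (-b * x ^ 2)) atTop (𝓝 0) := by
  have h := (rpow_mul_exp_neg_mul_sq_isLittleO_exp_neg hb 1).isBigO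
  have h2 : Tendsto (fun x : ℝ => rexp (-(1/2) * x)) atTop (𝓝 0) :=
    Real.tendsto_exp_atBot.comp ((tendsto_id (α := ℝ)).const_mul_atTop_of_neg
      (by norm_num : (-(1/2) : ℝ) < 0))
  have h3 := h.trans_tendsto h2
  simpa [Real.rpow_one] using h3

lemma tendsto_mul_exp_atBot' {b : ℝ} (hb : 0 < b) :
    Tendsto (fun x : ℝ => x * rexp (-b * x ^ 2)) atBot (𝓝 0) := by
  have h := ((tendsto_mul_exp_atTop' hb).comp tendsto_neg_atBot_atTop).neg
  rw [neg_zero] at h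
  have heq : (fun x : ℝ => -(((fun x : ℝ => x * rexp (-b * x ^ 2)) ∘ Neg.neg) x))
      = fun x : ℝ => x * rexp (-b * x ^ 2) := by
    funext x
    simp only [Function.comp_apply, neg_sq]
    ring
  rwa [heq] at h

lemma integral_mul_exp_zero' {b : ℝ} (hb : 0 < b) :
    ∫ x : ℝ, x * rexp (-b * x ^ 2) = 0 := by
  have h := integral_neg_eq_self (fun y : ℝ => y * rexp (-b * y ^ 2)) (volume : Measure ℝ)
  simp only [neg_sq, neg_mul] at h
  rw [integral_neg] at h
  simp only [neg_mul]
  linarith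

lemma integral_sq_mul_exp' {b : ℝ} (hb : 0 < b) :
    ∫ x : ℝ, x ^ 2 * rexp (-b * x ^ 2) = (2 * b)⁻¹ * Real.sqrt (π / b) := by
  have hb' : (2 : ℝ) * b ≠ 0 := by positivity
  have hint_exp : Integrable (fun x : ℝ => rexp (-b * x ^ 2)) := integrable_exp_neg_mul_sq hb
  have hint_sq : Integrable (fun x : ℝ => x ^ 2 * rexp (-b * x ^ 2)) := by
    have h := integrable_rpow_mul_exp_neg_mul_sq hb (s := 2) (by norm_num)
    have heq : (fun x : ℝ => x ^ (2:ℝ) * rexp (-b * x ^ 2))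
        = fun x : ℝ => x ^ 2 * rexp (-b * x ^ 2) := by
      funext x
      rw [show (2:ℝ) = ((2:ℕ):ℝ) by norm_num, Real.rpow_natCast]
    rwa [heq] at h
  have hderiv : ∀ x : ℝ, HasDerivAt (fun y : ℝ => (-(2*b)⁻¹) * (y * rexp (-b * y ^ 2)))
      (x ^ 2 * rexp (-b * x ^ 2) - (2*b)⁻¹ * rexp (-b * x ^ 2)) x := by
    intro x
    have h1 : HasDerivAt (fun y : ℝ => -b * y ^ 2) (-b * (2 * x)) x := by
      simpa using (hasDerivAt_pow 2 x).const_mul (-b)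
    have h2 := ((hasDerivAt_id x).mul h1.exp).const_mul (-(2*b)⁻¹)
    refine h2.congr_deriv ?_
    simp only [id]
    field_simp
    ring
  have h0 : ∫ x : ℝ, (x ^ 2 * rexp (-b * x ^ 2) - (2*b)⁻¹ * rexp (-b * x ^ 2)) = 0 - 0 := by
    apply integral_of_hasDerivAt_of_tendsto hderiv (hint_sq.sub (hint_exp.const_mul _))
    · simpa using (tendsto_mul_exp_atBot' hb).const_mul (-(2*b)⁻¹)
    · simpa using (tendsto_mul_exp_atTop' hb).const_mul (-(2*b)⁻¹)
  rw [integral_sub hint_sq (hint_exp.const_mul _), integral_const_mul, integral_gaussian] at h0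
  linarith

end GaussMoments


section GaussReal

lemma gaussianPDFReal_zero_mean' (v : ℝ≥0) (x : ℝ) :
    gaussianPDFReal 0 v x = (Real.sqrt (2 * π * v))⁻¹ * rexp (-(2 * (v:ℝ))⁻¹ * x ^ 2) := by
  rw [gaussianPDFReal]
  congr 1
  rw [sub_zero]
  ring_nf

lemma integral_gaussianReal_eq' {v : ℝ≥0} (hv : v ≠ 0) (g : ℝ → ℝ) :
    ∫ x, g x ∂(gaussianReal 0 v) = ∫ x, gaussianPDFReal 0 v x * g x := by
  rw [gaussianReal_of_var_ne_zero _ hv]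
  rw [show (gaussianPDF 0 v)
      = fun x => ((Real.toNNReal (gaussianPDFReal 0 v x) : ℝ≥0) : ℝ≥0∞) from rfl]
  rw [integral_withDensity_eq_integral_smul (measurable_gaussianPDFReal 0 v).real_toNNReal g]
  congr 1
  funext x
  rw [NNReal.smul_def, smul_eq_mul, Real.coe_toNNReal _ (gaussianPDFReal_nonneg 0 v x)]

lemma integrable_gaussianReal_iff' {v : ℝ≥0} (hv : v ≠ 0) (g : ℝ → ℝ) :
    Integrable g (gaussianReal 0 v)
      ↔ Integrable (fun x => gaussianPDFReal 0 v x * g x) volume := by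
  rw [gaussianReal_of_var_ne_zero _ hv]
  rw [show (gaussianPDF 0 v)
      = fun x => ((Real.toNNReal (gaussianPDFReal 0 v x) : ℝ≥0) : ℝ≥0∞) from rfl]
  rw [integrable_withDensity_iff_integrable_smul (measurable_gaussianPDFReal 0 v).real_toNNReal]
  have heq : (fun x => Real.toNNReal (gaussianPDFReal 0 v x) • g x)
      = fun x => gaussianPDFReal 0 v x * g x := by
    funext x
    rw [NNReal.smul_def, smul_eq_mul, Real.coe_toNNReal _ (gaussianPDFReal_nonneg 0 v x)]
  rw [heq]

lemma vpos {v : ℝ≥0} (hv : v ≠ 0) : (0:ℝ) < v := by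
  exact_mod_cast pos_iff_ne_zero.2 hv

lemma integral_id_gaussianReal' {v : ℝ≥0} (hv : v ≠ 0) :
    ∫ x, x ∂(gaussianReal 0 v) = 0 := by
  have hv' := vpos hv
  have hb : 0 < (2 * (v:ℝ))⁻¹ := by positivity
  rw [integral_gaussianReal_eq' hv]
  have heq : (fun x => gaussianPDFReal 0 v x * x)
      = fun x => (Real.sqrt (2 * π * v))⁻¹ * (x * rexp (-(2 * (v:ℝ))⁻¹ * x ^ 2)) := by
    funext x
    rw [gaussianPDFReal_zero_mean']
    ring
  rw [heq, integral_const_mul, integral_mul_exp_zero' hb, mul_zero]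

lemma integral_sq_gaussianReal' {v : ℝ≥0} (hv : v ≠ 0) :
    ∫ x, x * x ∂(gaussianReal 0 v) = (v : ℝ) := by
  have hv' := vpos hv
  have hb : 0 < (2 * (v:ℝ))⁻¹ := by positivity
  rw [integral_gaussianReal_eq' hv]
  have heq : (fun x => gaussianPDFReal 0 v x * (x * x))
      = fun x => (Real.sqrt (2 * π * v))⁻¹ * (x ^ 2 * rexp (-(2 * (v:ℝ))⁻¹ * x ^ 2)) := by
    funext x
    rw [gaussianPDFReal_zero_mean']
    ring
  rw [heq, integral_const_mul, integral_sq_mul_exp' hb]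
  rw [show (2 * (2 * (v:ℝ))⁻¹)⁻¹ = (v:ℝ) by field_simp]
  rw [show π / (2 * (v:ℝ))⁻¹ = 2 * π * v by field_simp]
  have hs : 0 < Real.sqrt (2 * π * v) := Real.sqrt_pos.2 (by positivity)
  field_simp

lemma memℒp_two_id_gaussianReal' {v : ℝ≥0} (hv : v ≠ 0) :
    MemLp (id : ℝ → ℝ) 2 (gaussianReal 0 v) := by
  have hv' := vpos hv
  have hb : 0 < (2 * (v:ℝ))⁻¹ := by positivity
  rw [memLp_two_iff_integrable_sq aestronglyMeasurable_id]
  have h2 : Integrable (fun x : ℝ => x ^ 2 * rexp (-(2 * (v:ℝ))⁻¹ * x ^ 2)) := by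
    have h := integrable_rpow_mul_exp_neg_mul_sq hb (s := 2) (by norm_num)
    have heq : (fun x : ℝ => x ^ (2:ℝ) * rexp (-(2 * (v:ℝ))⁻¹ * x ^ 2))
        = fun x : ℝ => x ^ 2 * rexp (-(2 * (v:ℝ))⁻¹ * x ^ 2) := by
      funext x
      rw [show (2:ℝ) = ((2:ℕ):ℝ) by norm_num, Real.rpow_natCast]
    rwa [heq] at h
  rw [show (fun x : ℝ => id x ^ 2) = fun x : ℝ => x ^ 2 from rfl]
  rw [integrable_gaussianReal_iff' hv]
  have heq : (fun x => gaussianPDFReal 0 v x * x ^ 2)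
      = fun x => (Real.sqrt (2 * π * v))⁻¹ * (x ^ 2 * rexp (-(2 * (v:ℝ))⁻¹ * x ^ 2)) := by
    funext x
    rw [gaussianPDFReal_zero_mean']
    ring
  rw [heq]
  exact h2.const_mul _

end GaussReal


section Prob

variable {Ω : Type*} [MeasurableSpace Ω] {μ : Measure Ω}

lemma pull_gaussian {W : Ω → ℝ} (hW : Measurable W) {v : ℝ≥0} (hv : v ≠ 0)
    (hlaw : μ.map W = gaussianReal 0 v) :
    MemLp W 2 μ ∧ (∫ ω, W ω ∂μ) = 0 ∧ (∫ ω, W ω * W ω ∂μ) = (v : ℝ) := by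
  refine ⟨?_, ?_, ?_⟩
  · have h := memℒp_two_id_gaussianReal' hv
    rw [← hlaw] at h
    exact (memLp_map_measure_iff aestronglyMeasurable_id hW.aemeasurable).1 h
  · have h2 : ∫ ω, W ω ∂μ = ∫ x, x ∂(μ.map W) :=
      (integral_map hW.aemeasurable aestronglyMeasurable_id).symm
    rw [h2, hlaw, integral_id_gaussianReal' hv]
  · have h2 : ∫ ω, W ω * W ω ∂μ = ∫ x, x * x ∂(μ.map W) :=
      (integral_map hW.aemeasurable
        (measurable_id.mul measurable_id).aestronglyMeasurable).symm
    rw [h2, hlaw, integral_sq_gaussianReal' hv]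

lemma integrable_mul_of_memℒp_two [IsFiniteMeasure μ] {f g : Ω → ℝ}
    (hf : MemLp f 2 μ) (hg : MemLp g 2 μ) :
    Integrable (fun ω => f ω * g ω) μ := by
  have h : Integrable (fun ω => (1/2 : ℝ) * (f ω ^ 2 + g ω ^ 2)) μ := by
    exact (hf.integrable_sq.add hg.integrable_sq).const_mul (1/2 : ℝ)
  refine h.mono' (hf.aestronglyMeasurable.mul hg.aestronglyMeasurable) ?_
  filter_upwards with ω
  rw [Real.norm_eq_abs, abs_mul]
  nlinarith [sq_nonneg (|f ω| - |g ω|), abs_nonneg (f ω), abs_nonneg (g ω),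
    sq_abs (f ω), sq_abs (g ω)]

lemma variance_eq_cov [IsProbabilityMeasure μ] {f : Ω → ℝ} (hf : MemLp f 2 μ) :
    variance f μ = cov f f μ := by
  have hsq : Integrable (fun ω => f ω ^ 2) μ := hf.integrable_sq
  have hint : Integrable f μ := hf.integrable one_le_two
  rw [variance_eq_sub hf]
  unfold cov
  have heq : (fun ω => (f ω - ∫ ω', f ω' ∂μ) * (f ω - ∫ ω', f ω' ∂μ))
      = fun ω => f ω ^ 2 - ((2 * ∫ ω', f ω' ∂μ) * f ω - (∫ ω', f ω' ∂μ) ^ 2) := by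
    funext ω; ring
  have h1 : Integrable (fun ω => (2 * ∫ ω', f ω' ∂μ) * f ω - (∫ ω', f ω' ∂μ) ^ 2) μ := by
    exact (hint.const_mul _).sub (integrable_const _)
  rw [heq, integral_sub hsq h1,
    integral_sub (hint.const_mul _) (integrable_const _), integral_const_mul, integral_const]
  simp only [measure_univ, probReal_univ, ENNReal.toReal_one, smul_eq_mul, one_mul]
  have hpow : μ[f ^ 2] = ∫ ω, f ω ^ 2 ∂μ := rfl
  rw [hpow]
  ring

lemma cov_formula [IsProbabilityMeasure μ]
    (T U V W : Ω → ℝ)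
    (hT : MemLp T 2 μ) (hU : MemLp U 2 μ) (hV : MemLp V 2 μ) (hW : MemLp W 2 μ)
    (hmT : ∫ ω, T ω ∂μ = 0) (hmU : ∫ ω, U ω ∂μ = 0)
    (hmV : ∫ ω, V ω ∂μ = 0) (hmW : ∫ ω, W ω ∂μ = 0)
    {vT vU vV vW : ℝ}
    (hvT : ∫ ω, T ω * T ω ∂μ = vT) (hvU : ∫ ω, U ω * U ω ∂μ = vU)
    (hvV : ∫ ω, V ω * V ω ∂μ = vV) (hvW : ∫ ω, W ω * W ω ∂μ = vW)
    (hTU : ∫ ω, T ω * U ω ∂μ = 0) (hTV : ∫ ω, T ω * V ω ∂μ = 0)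
    (hTW : ∫ ω, T ω * W ω ∂μ = 0) (hUV : ∫ ω, U ω * V ω ∂μ = 0)
    (hUW : ∫ ω, U ω * W ω ∂μ = 0) (hVW : ∫ ω, V ω * W ω ∂μ = 0)
    (p1 p2 p3 p4 c q1 q2 q3 q4 d : ℝ) :
    cov (fun ω => p1 * T ω + p2 * U ω + p3 * V ω + p4 * W ω + c)
        (fun ω => q1 * T ω + q2 * U ω + q3 * V ω + q4 * W ω + d) μ
      = p1 * q1 * vT + p2 * q2 * vU + p3 * q3 * vV + p4 * q4 * vW := by
  have iT : Integrable T μ := hT.integrable one_le_two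
  have iU : Integrable U μ := hU.integrable one_le_two
  have iV : Integrable V μ := hV.integrable one_le_two
  have iW : Integrable W μ := hW.integrable one_le_two
  have mean : ∀ r1 r2 r3 r4 e : ℝ,
      ∫ ω, (r1 * T ω + r2 * U ω + r3 * V ω + r4 * W ω + e) ∂μ = e := by
    intro r1 r2 r3 r4 e
    have i2 : Integrable (fun ω => r1 * T ω + r2 * U ω) μ := by
      exact (iT.const_mul r1).add (iU.const_mul r2)
    have i3 : Integrable (fun ω => r1 * T ω + r2 * U ω + r3 * V ω) μ := by
      exact i2.add (iV.const_mul r3)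
    have i4 : Integrable (fun ω => r1 * T ω + r2 * U ω + r3 * V ω + r4 * W ω) μ := by
      exact i3.add (iW.const_mul r4)
    rw [integral_add i4 (integrable_const e),
      integral_add i3 (iW.const_mul r4),
      integral_add i2 (iV.const_mul r3),
      integral_add (iT.const_mul r1) (iU.const_mul r2),
      integral_const_mul, integral_const_mul, integral_const_mul, integral_const_mul,
      hmT, hmU, hmV, hmW, integral_const]
    simp [measure_univ]
  unfold cov
  rw [mean p1 p2 p3 p4 c, mean q1 q2 q3 q4 d]
  have iTT := integrable_mul_of_memℒp_two hT hT
  have iTU := integrable_mul_of_memℒp_two hT hU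
  have iTV := integrable_mul_of_memℒp_two hT hV
  have iTW := integrable_mul_of_memℒp_two hT hW
  have iUU := integrable_mul_of_memℒp_two hU hU
  have iUV := integrable_mul_of_memℒp_two hU hV
  have iUW := integrable_mul_of_memℒp_two hU hW
  have iVV := integrable_mul_of_memℒp_two hV hV
  have iVW := integrable_mul_of_memℒp_two hV hW
  have iWW := integrable_mul_of_memℒp_two hW hW
  have heq : (fun ω => ((p1 * T ω + p2 * U ω + p3 * V ω + p4 * W ω + c) - c)
        * ((q1 * T ω + q2 * U ω + q3 * V ω + q4 * W ω + d) - d))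
      = fun ω => (p1 * q1) * (T ω * T ω) + ((p1 * q2 + p2 * q1) * (T ω * U ω)
        + ((p1 * q3 + p3 * q1) * (T ω * V ω) + ((p1 * q4 + p4 * q1) * (T ω * W ω)
        + ((p2 * q2) * (U ω * U ω) + ((p2 * q3 + p3 * q2) * (U ω * V ω)
        + ((p2 * q4 + p4 * q2) * (U ω * W ω) + ((p3 * q3) * (V ω * V ω)
        + ((p3 * q4 + p4 * q3) * (V ω * W ω) + (p4 * q4) * (W ω * W ω))))))))) := by
    funext ω; ring
  rw [heq]
  have r9 : Integrable (fun ω => (p3 * q4 + p4 * q3) * (V ω * W ω)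
      + (p4 * q4) * (W ω * W ω)) μ := by
    exact (iVW.const_mul _).add (iWW.const_mul _)
  have r8 : Integrable (fun ω => (p3 * q3) * (V ω * V ω) + ((p3 * q4 + p4 * q3) * (V ω * W ω)
      + (p4 * q4) * (W ω * W ω))) μ := by
    exact (iVV.const_mul _).add r9
  have r7 : Integrable (fun ω => (p2 * q4 + p4 * q2) * (U ω * W ω) + ((p3 * q3) * (V ω * V ω)
      + ((p3 * q4 + p4 * q3) * (V ω * W ω) + (p4 * q4) * (W ω * W ω)))) μ :=
    (iUW.const_mul _).add r8
  have r6 : Integrable (fun ω => (p2 * q3 + p3 * q2) * (U ω * V ω)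
      + ((p2 * q4 + p4 * q2) * (U ω * W ω) + ((p3 * q3) * (V ω * V ω)
      + ((p3 * q4 + p4 * q3) * (V ω * W ω) + (p4 * q4) * (W ω * W ω))))) μ :=
    (iUV.const_mul _).add r7
  have r5 : Integrable (fun ω => (p2 * q2) * (U ω * U ω) + ((p2 * q3 + p3 * q2) * (U ω * V ω)
      + ((p2 * q4 + p4 * q2) * (U ω * W ω) + ((p3 * q3) * (V ω * V ω)
      + ((p3 * q4 + p4 * q3) * (V ω * W ω) + (p4 * q4) * (W ω * W ω)))))) μ :=
    (iUU.const_mul _).add r6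
  have r4 : Integrable (fun ω => (p1 * q4 + p4 * q1) * (T ω * W ω) + ((p2 * q2) * (U ω * U ω)
      + ((p2 * q3 + p3 * q2) * (U ω * V ω) + ((p2 * q4 + p4 * q2) * (U ω * W ω)
      + ((p3 * q3) * (V ω * V ω) + ((p3 * q4 + p4 * q3) * (V ω * W ω)
      + (p4 * q4) * (W ω * W ω))))))) μ := by
    exact (iTW.const_mul _).add r5
  have r3 : Integrable (fun ω => (p1 * q3 + p3 * q1) * (T ω * V ω)
      + ((p1 * q4 + p4 * q1) * (T ω * W ω) + ((p2 * q2) * (U ω * U ω)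
      + ((p2 * q3 + p3 * q2) * (U ω * V ω) + ((p2 * q4 + p4 * q2) * (U ω * W ω)
      + ((p3 * q3) * (V ω * V ω) + ((p3 * q4 + p4 * q3) * (V ω * W ω)
      + (p4 * q4) * (W ω * W ω)))))))) μ := by
    exact (iTV.const_mul _).add r4
  have r2 : Integrable (fun ω => (p1 * q2 + p2 * q1) * (T ω * U ω)
      + ((p1 * q3 + p3 * q1) * (T ω * V ω) + ((p1 * q4 + p4 * q1) * (T ω * W ω)
      + ((p2 * q2) * (U ω * U ω) + ((p2 * q3 + p3 * q2) * (U ω * V ω)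
      + ((p2 * q4 + p4 * q2) * (U ω * W ω) + ((p3 * q3) * (V ω * V ω)
      + ((p3 * q4 + p4 * q3) * (V ω * W ω) + (p4 * q4) * (W ω * W ω))))))))) μ :=
    (iTU.const_mul _).add r3
  rw [integral_add (iTT.const_mul _) r2, integral_add (iTU.const_mul _) r3,
    integral_add (iTV.const_mul _) r4, integral_add (iTW.const_mul _) r5,
    integral_add (iUU.const_mul _) r6, integral_add (iUV.const_mul _) r7,
    integral_add (iUW.const_mul _) r8, integral_add (iVV.const_mul _) r9,
    integral_add (iVW.const_mul _) (iWW.const_mul _),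
    integral_const_mul, integral_const_mul, integral_const_mul, integral_const_mul,
    integral_const_mul, integral_const_mul, integral_const_mul, integral_const_mul,
    integral_const_mul, integral_const_mul,
    hvT, hvU, hvV, hvW, hTU, hTV, hTW, hUV, hUW, hVW]
  ring

end Prob



/-- The squared correlation coefficient between `E'` and `B` equals
`(a_B²·a_E²/(a_E²+b_E²) + v_Y)/(a_B² + v_Y + b_B²)`, and
`Var(E') = Cov(E', B) = a_B²·a_E²/(a_E²+b_E²) + v_Y`. -/
theorem stmt_4 {Ω : Type*} [MeasurableSpace Ω] (μ : Measure Ω) [IsProbabilityMeasure μ]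
    (A X1 X2 Y : Ω → ℝ)
    (hA : Measurable A) (hX1 : Measurable X1) (hX2 : Measurable X2) (hY : Measurable Y)
    (hindep : iIndepFun ![A, X1, X2, Y] μ)
    (hAlaw : μ.map A = gaussianReal 0 1)
    (hX1law : μ.map X1 = gaussianReal 0 1)
    (hX2law : μ.map X2 = gaussianReal 0 1)
    (v_Y : ℝ) (hv_Y : 0 < v_Y)
    (hYlaw : μ.map Y = gaussianReal 0 (Real.toNNReal v_Y))
    (a_B b_B a_E b_E e_B : ℝ)
    (ha_B : a_B ≠ 0) (hb_B : b_B ≠ 0) (ha_E : a_E ≠ 0) (hb_E : b_E ≠ 0)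
    (B E E' : Ω → ℝ)
    (hB : B = fun ω => a_B * A ω + Y ω + b_B * X1 ω + e_B)
    (hE : E = fun ω => a_E * A ω + b_E * X2 ω)
    (hE' : E' = fun ω => (a_B * a_E / (a_E ^ 2 + b_E ^ 2)) * E ω + Y ω) :
    (cov E' B μ) ^ 2 / (variance E' μ * variance B μ)
      = (a_B ^ 2 * a_E ^ 2 / (a_E ^ 2 + b_E ^ 2) + v_Y) / (a_B ^ 2 + v_Y + b_B ^ 2)
    ∧ variance E' μ = a_B ^ 2 * a_E ^ 2 / (a_E ^ 2 + b_E ^ 2) + v_Y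
    ∧ cov E' B μ = a_B ^ 2 * a_E ^ 2 / (a_E ^ 2 + b_E ^ 2) + v_Y := by
  subst hE
  subst hE'
  subst hB
  -- basic facts about the four gaussians
  have h1 : (1 : ℝ≥0) ≠ 0 := one_ne_zero
  have hvY0 : Real.toNNReal v_Y ≠ 0 := by
    simp only [ne_eq, Real.toNNReal_eq_zero, not_le]
    exact hv_Y
  have hvYc : ((Real.toNNReal v_Y : ℝ≥0) : ℝ) = v_Y := Real.coe_toNNReal _ hv_Y.le
  obtain ⟨hA2, hAm, hAv⟩ := pull_gaussian hA h1 hAlaw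
  obtain ⟨hX12, hX1m, hX1v⟩ := pull_gaussian hX1 h1 hX1law
  obtain ⟨hX22, hX2m, hX2v⟩ := pull_gaussian hX2 h1 hX2law
  obtain ⟨hY2, hYm, hYv⟩ := pull_gaussian hY hvY0 hYlaw
  rw [NNReal.coe_one] at hAv hX1v hX2v
  rw [hvYc] at hYv
  -- cross products vanish
  have cross : ∀ (i j : Fin 4), i ≠ j →
      ∫ ω, (![A, X1, X2, Y] i) ω * (![A, X1, X2, Y] j) ω ∂μ
        = (∫ ω, (![A, X1, X2, Y] i) ω ∂μ) * ∫ ω, (![A, X1, X2, Y] j) ω ∂μ := by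
    intro i j hij
    have hind := hindep.indepFun hij
    have hmeas : ∀ k : Fin 4, Measurable (![A, X1, X2, Y] k) := by
      intro k
      fin_cases k <;> simpa using ‹_›
    exact hind.integral_mul_eq_mul_integral (hmeas i).aestronglyMeasurable (hmeas j).aestronglyMeasurable
  have hAX1 : ∫ ω, A ω * X1 ω ∂μ = 0 := by
    have h := cross 0 1 (by decide)
    simp only [Matrix.cons_val_zero, Matrix.cons_val_one, Matrix.head_cons] at h
    rw [h, hAm, zero_mul]
  have hAX2 : ∫ ω, A ω * X2 ω ∂μ = 0 := by
    have h := cross 0 2 (by decide)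
    simp only [Matrix.cons_val_zero, Matrix.cons_val_two, Matrix.tail_cons,
      Matrix.head_cons] at h
    rw [h, hAm, zero_mul]
  have hAY : ∫ ω, A ω * Y ω ∂μ = 0 := by
    have h := cross 0 3 (by decide)
    simp only [Matrix.cons_val_zero, Matrix.cons_val_three, Matrix.tail_cons,
      Matrix.head_cons] at h
    rw [h, hAm, zero_mul]
  have hX1X2 : ∫ ω, X1 ω * X2 ω ∂μ = 0 := by
    have h := cross 1 2 (by decide)
    simp only [Matrix.cons_val_one, Matrix.cons_val_two, Matrix.tail_cons,
      Matrix.head_cons, Matrix.cons_val_zero] at h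
    rw [h, hX1m, zero_mul]
  have hX1Y : ∫ ω, X1 ω * Y ω ∂μ = 0 := by
    have h := cross 1 3 (by decide)
    simp only [Matrix.cons_val_one, Matrix.cons_val_three, Matrix.tail_cons,
      Matrix.head_cons, Matrix.cons_val_zero] at h
    rw [h, hX1m, zero_mul]
  have hX2Y : ∫ ω, X2 ω * Y ω ∂μ = 0 := by
    have h := cross 2 3 (by decide)
    simp only [Matrix.cons_val_two, Matrix.cons_val_three, Matrix.tail_cons,
      Matrix.head_cons] at h
    rw [h, hX2m, zero_mul]
  -- abbreviations
  set S : ℝ := a_E ^ 2 + b_E ^ 2 with hS_def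
  have hS : 0 < S := by positivity
  set c : ℝ := a_B * a_E / S with hc_def
  -- canonical forms
  have hE'eq : (fun ω => c * (a_E * A ω + b_E * X2 ω) + Y ω)
      = fun ω => (c * a_E) * A ω + (0:ℝ) * X1 ω + (c * b_E) * X2 ω + 1 * Y ω + 0 := by
    funext ω; ring
  have hBeq : (fun ω => a_B * A ω + Y ω + b_B * X1 ω + e_B)
      = fun ω => a_B * A ω + b_B * X1 ω + (0:ℝ) * X2 ω + 1 * Y ω + e_B := by
    funext ω; ring
  -- memℒp of the combinations
  have hE'mem : MemLp (fun ω => (c * a_E) * A ω + (0:ℝ) * X1 ω + (c * b_E) * X2 ω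
      + 1 * Y ω + 0) 2 μ := by
    exact ((((hA2.const_mul _).add (hX12.const_mul _)).add (hX22.const_mul _)).add
      (hY2.const_mul _)).add (memLp_const _)
  have hBmem : MemLp (fun ω => a_B * A ω + b_B * X1 ω + (0:ℝ) * X2 ω + 1 * Y ω + e_B) 2 μ := by
    exact ((((hA2.const_mul _).add (hX12.const_mul _)).add (hX22.const_mul _)).add
      (hY2.const_mul _)).add (memLp_const _)
  -- covariance and variances via the formula
  have covEB : cov (fun ω => c * (a_E * A ω + b_E * X2 ω) + Y ω)
      (fun ω => a_B * A ω + Y ω + b_B * X1 ω + e_B) μ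
      = (c * a_E) * a_B * 1 + 0 * b_B * 1 + (c * b_E) * 0 * 1 + 1 * 1 * v_Y := by
    rw [hE'eq, hBeq]
    exact cov_formula A X1 X2 Y hA2 hX12 hX22 hY2 hAm hX1m hX2m hYm hAv hX1v hX2v hYv
      hAX1 hAX2 hAY hX1X2 hX1Y hX2Y _ _ _ _ _ _ _ _ _ _
  have varE' : variance (fun ω => c * (a_E * A ω + b_E * X2 ω) + Y ω) μ
      = (c * a_E) * (c * a_E) * 1 + 0 * 0 * 1 + (c * b_E) * (c * b_E) * 1 + 1 * 1 * v_Y := by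
    rw [hE'eq, variance_eq_cov hE'mem]
    exact cov_formula A X1 X2 Y hA2 hX12 hX22 hY2 hAm hX1m hX2m hYm hAv hX1v hX2v hYv
      hAX1 hAX2 hAY hX1X2 hX1Y hX2Y _ _ _ _ _ _ _ _ _ _
  have varB : variance (fun ω => a_B * A ω + Y ω + b_B * X1 ω + e_B) μ
      = a_B * a_B * 1 + b_B * b_B * 1 + 0 * 0 * 1 + 1 * 1 * v_Y := by
    rw [hBeq, variance_eq_cov hBmem]
    exact cov_formula A X1 X2 Y hA2 hX12 hX22 hY2 hAm hX1m hX2m hYm hAv hX1v hX2v hYv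
      hAX1 hAX2 hAY hX1X2 hX1Y hX2Y _ _ _ _ _ _ _ _ _ _
  -- numeric simplifications
  have hK : (c * a_E) * a_B * 1 + 0 * b_B * 1 + (c * b_E) * 0 * 1 + 1 * 1 * v_Y
      = a_B ^ 2 * a_E ^ 2 / S + v_Y := by
    rw [hc_def]
    field_simp
    ring
  have hKv : (c * a_E) * (c * a_E) * 1 + 0 * 0 * 1 + (c * b_E) * (c * b_E) * 1 + 1 * 1 * v_Y
      = a_B ^ 2 * a_E ^ 2 / S + v_Y := by
    rw [hc_def, hS_def]
    field_simp
    ring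
  have hM : a_B * a_B * 1 + b_B * b_B * 1 + 0 * 0 * 1 + 1 * 1 * v_Y
      = a_B ^ 2 + v_Y + b_B ^ 2 := by ring
  rw [hK] at covEB
  rw [hKv] at varE'
  rw [hM] at varB
  have hKpos : 0 < a_B ^ 2 * a_E ^ 2 / S + v_Y := by positivity
  have hMpos : 0 < a_B ^ 2 + v_Y + b_B ^ 2 := by positivity
  refine ⟨?_, varE', covEB⟩
  rw [covEB, varE', varB, pow_two, mul_div_mul_left _ _ hKpos.ne']
end

section
/- Let A, X1, Z1 be independent standard Gaussian random variables and Y a centered Gaussian random variable with variance v_Y > 0, independent of A, X1, Z1. Let a_B, b_B, a_E, b_E be nonzero real constants with b_B² ≥ a_B²·a_E²/(a_E² + b_E²), let e_B be real, and set B := a_B·A + Y + b_B·X1 + e_B. With E := a_E·A + b_E·X2 for X2 a further independent standard Gaussian, define E'' := (a_B·a_E/(a_E² + b_E²))·E + Y + sqrt(b_B² − a_B²·a_E²/(a_E² + b_E²))·Z1 in a model where b_B·X1 is replaced in distribution by (a_B·a_E/(a_E² + b_E²))·E + sqrt(b_B² − a_B²·a_E²/(a_E² + b_E²))·Z1 plus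 an independent Gaussian term. Then the squared correlation coefficient between E'' and B equals (v_Y + b_B²)/(a_B² + v_Y + b_B²), and Var(E'') = Cov(E'', B) = v_Y + b_B². -/
open MeasureTheory ProbabilityTheory

open MeasureTheory ProbabilityTheory Real
open scoped NNReal ENNReal

section GaussAux

lemma my_integral_gaussianReal (v : ℝ≥0) (hv : v ≠ 0) (f : ℝ → ℝ) :
    ∫ x, f x ∂(gaussianReal 0 v) = ∫ x, gaussianPDFReal 0 v x * f x := by
  rw [gaussianReal_of_var_ne_zero 0 hv]
  have h : (gaussianPDF 0 v) = fun x => ((Real.toNNReal (gaussianPDFReal 0 v x) : ℝ≥0) : ℝ≥0∞) :=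
    rfl
  rw [h, integral_withDensity_eq_integral_smul (measurable_gaussianPDFReal 0 v).real_toNNReal f]
  congr 1
  ext x
  simp [NNReal.smul_def, Real.coe_toNNReal _ (gaussianPDFReal_nonneg 0 v x)]

lemma my_integrable_gaussianReal (v : ℝ≥0) (hv : v ≠ 0) (f : ℝ → ℝ) :
    Integrable f (gaussianReal 0 v) ↔
      Integrable (fun x => gaussianPDFReal 0 v x * f x) volume := by
  rw [gaussianReal_of_var_ne_zero 0 hv]
  have h : (gaussianPDF 0 v) = fun x => ((Real.toNNReal (gaussianPDFReal 0 v x) : ℝ≥0) : ℝ≥0∞) :=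
    rfl
  rw [h, integrable_withDensity_iff_integrable_smul (measurable_gaussianPDFReal 0 v).real_toNNReal]
  constructor <;> intro hh <;> [skip; skip] <;>
    · refine hh.congr (Filter.Eventually.of_forall fun x => ?_)
      simp [NNReal.smul_def, Real.coe_toNNReal _ (gaussianPDFReal_nonneg 0 v x)]

lemma my_pdf_eq (v : ℝ≥0) (hv : v ≠ 0) :
    gaussianPDFReal 0 v = fun x => (√(2 * π * v))⁻¹ * rexp (-(2 * (v : ℝ))⁻¹ * x ^ 2) := by
  ext x
  rw [gaussianPDFReal]
  have hv' : (v : ℝ) ≠ 0 := by exact_mod_cast hv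
  congr 1
  rw [sub_zero]
  field_simp

end GaussAux


section Moments
variable {b : ℝ}

lemma my_I1 (hb : 0 < b) : ∫ x : ℝ, x * rexp (-b * x ^ 2) = 0 := by
  have hderiv : ∀ x : ℝ, HasDerivAt (fun x : ℝ => -(2 * b)⁻¹ * rexp (-b * x ^ 2))
      (x * rexp (-b * x ^ 2)) x := by
    intro x
    have h := (((hasDerivAt_pow 2 x).const_mul (-b)).exp).const_mul (-(2 * b)⁻¹)
    refine h.congr_deriv ?_
    field_simp
    ring
  exact integral_eq_zero_of_hasDerivAt_of_integrable hderiv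
    (integrable_mul_exp_neg_mul_sq hb) ((integrable_exp_neg_mul_sq hb).const_mul _)

lemma my_int2 (hb : 0 < b) : Integrable (fun x : ℝ => x ^ 2 * rexp (-b * x ^ 2)) := by
  have h := integrable_rpow_mul_exp_neg_mul_sq hb (s := 2) (by norm_num)
  simpa [Real.rpow_two] using h

lemma my_I2 (hb : 0 < b) :
    ∫ x : ℝ, x ^ 2 * rexp (-b * x ^ 2) = (2 * b)⁻¹ * ∫ x : ℝ, rexp (-b * x ^ 2) := by
  have hderiv : ∀ x : ℝ, HasDerivAt (fun x : ℝ => -(2 * b)⁻¹ * (x * rexp (-b * x ^ 2)))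
      (x ^ 2 * rexp (-b * x ^ 2) - (2 * b)⁻¹ * rexp (-b * x ^ 2)) x := by
    intro x
    have h := ((hasDerivAt_id x).mul
      (((hasDerivAt_pow 2 x).const_mul (-b)).exp)).const_mul (-(2 * b)⁻¹)
    refine h.congr_deriv ?_
    simp only [id_eq]
    field_simp
    ring
  have h0 : ∫ x : ℝ, (x ^ 2 * rexp (-b * x ^ 2) - (2 * b)⁻¹ * rexp (-b * x ^ 2)) = 0 :=
    integral_eq_zero_of_hasDerivAt_of_integrable hderiv
      ((my_int2 hb).sub ((integrable_exp_neg_mul_sq hb).const_mul _))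
      ((integrable_mul_exp_neg_mul_sq hb).const_mul _)
  have h1 := integral_sub (my_int2 hb) ((integrable_exp_neg_mul_sq hb).const_mul (2 * b)⁻¹)
  rw [h0] at h1
  have h2 := h1.symm
  rw [sub_eq_zero] at h2
  rw [h2, MeasureTheory.integral_const_mul]

end Moments



section G3
variable {v : ℝ≥0}


lemma my_hvpos (hv : v ≠ 0) : (0 : ℝ) < (v : ℝ) := by
  positivity

lemma my_hb (hv : v ≠ 0) : (0 : ℝ) < (2 * (v : ℝ))⁻¹ := by
  have := my_hvpos hv
  positivity

lemma my_gauss_mean (hv : v ≠ 0) : ∫ x, x ∂(gaussianReal 0 v) = 0 := by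
  set b := (2 * (v : ℝ))⁻¹ with hbdef
  have hb := my_hb hv
  rw [my_integral_gaussianReal v hv, my_pdf_eq v hv]
  have : ∀ x : ℝ, ((√(2 * π * v))⁻¹ * rexp (-b * x ^ 2)) * x
      = (√(2 * π * v))⁻¹ * (x * rexp (-b * x ^ 2)) := by intro x; ring
  simp only [← hbdef]
  simp_rw [this, MeasureTheory.integral_const_mul, my_I1 (b := b) hb, mul_zero]

lemma my_gauss_sq (hv : v ≠ 0) : ∫ x, x ^ 2 ∂(gaussianReal 0 v) = (v : ℝ) := by
  set b := (2 * (v : ℝ))⁻¹ with hbdef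
  have hb := my_hb hv
  have hvpos := my_hvpos hv
  have hnorm : (√(2 * π * v))⁻¹ * ∫ x : ℝ, rexp (-b * x ^ 2) = 1 := by
    have h := integral_gaussianPDFReal_eq_one 0 hv
    rw [my_pdf_eq v hv] at h
    rw [← MeasureTheory.integral_const_mul]
    exact h
  rw [my_integral_gaussianReal v hv, my_pdf_eq v hv]
  have : ∀ x : ℝ, ((√(2 * π * v))⁻¹ * rexp (-b * x ^ 2)) * x ^ 2
      = (√(2 * π * v))⁻¹ * (x ^ 2 * rexp (-b * x ^ 2)) := by intro x; ring
  simp only [← hbdef]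
  simp_rw [this, MeasureTheory.integral_const_mul, my_I2 (b := b) hb, mul_left_comm, hnorm, mul_one]
  have hne : (v:ℝ) ≠ 0 := hvpos.ne'
  field_simp
  rw [hbdef, one_div, inv_inv]

lemma my_gauss_memℒp (hv : v ≠ 0) : MemLp (id : ℝ → ℝ) 2 (gaussianReal 0 v) := by
  have hb := my_hb hv
  rw [memLp_two_iff_integrable_sq aestronglyMeasurable_id]
  rw [show (fun x : ℝ => id x ^ 2) = fun x : ℝ => x ^ 2 from rfl]
  rw [my_integrable_gaussianReal v hv, my_pdf_eq v hv]
  have : (fun x : ℝ => ((√(2 * π * v))⁻¹ * rexp (-(2 * (v:ℝ))⁻¹ * x ^ 2)) * x ^ 2)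
      = fun x : ℝ => (√(2 * π * v))⁻¹ * (x ^ 2 * rexp (-(2 * (v:ℝ))⁻¹ * x ^ 2)) := by
    ext x; ring
  rw [this]
  exact (my_int2 hb).const_mul _

end G3

section Transfer
variable {Ω : Type*} [MeasurableSpace Ω] {μ : Measure Ω} [IsProbabilityMeasure μ]
  {X : Ω → ℝ} {v : ℝ≥0}

lemma my_memℒp (hX : Measurable X) (hv : v ≠ 0) (hlaw : μ.map X = gaussianReal 0 v) :
    MemLp X 2 μ := by
  have h := (memLp_map_measure_iff (f := X) (g := id) aestronglyMeasurable_id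
    hX.aemeasurable).mp (by rw [hlaw]; exact my_gauss_memℒp hv)
  simpa using h

lemma my_mean (hX : Measurable X) (hv : v ≠ 0) (hlaw : μ.map X = gaussianReal 0 v) :
    ∫ ω, X ω ∂μ = 0 := by
  have h := integral_map (μ := μ) (φ := X) (f := fun x : ℝ => x) hX.aemeasurable
    measurable_id.aestronglyMeasurable
  rw [hlaw, my_gauss_mean hv] at h
  exact h.symm

lemma my_var (hX : Measurable X) (hv : v ≠ 0) (hlaw : μ.map X = gaussianReal 0 v) :
    variance X μ = (v : ℝ) := by
  rw [variance_eq_sub (my_memℒp hX hv hlaw)]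
  have h2 : ∫ ω, X ω ^ 2 ∂μ = (v : ℝ) := by
    have h := integral_map (μ := μ) (φ := X) (f := fun x : ℝ => x ^ 2) hX.aemeasurable
      (measurable_id.pow_const 2).aestronglyMeasurable
    rw [hlaw, my_gauss_sq hv] at h
    exact h.symm
  have h1 := my_mean hX hv hlaw
  simp only [Pi.pow_apply]
  rw [h2, h1]
  simp

end Transfer

section CovAux
variable {Ω : Type*} [MeasurableSpace Ω] {μ : Measure Ω} [IsProbabilityMeasure μ]
  {f g : Ω → ℝ}

lemma my_var_eq (hf : MemLp f 2 μ) :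
    variance f μ = ∫ ω, (f ω - ∫ ω', f ω' ∂μ) ^ 2 ∂μ := by
  exact variance_eq_integral hf.aestronglyMeasurable.aemeasurable

lemma my_variance_add_const (hf : MemLp f 2 μ) (c : ℝ) :
    variance (fun ω => f ω + c) μ = variance f μ := by
  have hmean : ∫ ω, (f ω + c) ∂μ = (∫ ω, f ω ∂μ) + c := by
    rw [integral_add (hf.integrable one_le_two) (integrable_const c)]
    simp
  have hfc : MemLp (fun ω => f ω + c) 2 μ := hf.add (memLp_const c)
  rw [my_var_eq hf, my_var_eq hfc, hmean]
  congr 1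
  ext ω
  ring

lemma my_cov_eq (hf : MemLp f 2 μ) (hg : MemLp g 2 μ) :
    cov f g μ = (variance (fun ω => f ω + g ω) μ - variance f μ - variance g μ) / 2 := by
  set mf := ∫ ω, f ω ∂μ with hmf
  set mg := ∫ ω, g ω ∂μ with hmg
  have hfg : MemLp (fun ω => f ω + g ω) 2 μ := hf.add hg
  have hmean : ∫ ω, (f ω + g ω) ∂μ = mf + mg :=
    integral_add (hf.integrable one_le_two) (hg.integrable one_le_two)
  have h1 : Integrable (fun ω => (f ω - mf) ^ 2) μ := by
    have := (hf.sub (memLp_const mf)).integrable_sq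
    simpa using this
  have h2 : Integrable (fun ω => (g ω - mg) ^ 2) μ := by
    have := (hg.sub (memLp_const mg)).integrable_sq
    simpa using this
  have h3 : Integrable (fun ω => (f ω + g ω - (mf + mg)) ^ 2) μ := by
    have := (hfg.sub (memLp_const (mf + mg))).integrable_sq
    simpa using this
  have key : ∀ ω, (f ω - mf) * (g ω - mg)
      = ((f ω + g ω - (mf + mg)) ^ 2 - (f ω - mf) ^ 2 - (g ω - mg) ^ 2) / 2 := by
    intro ω; ring
  rw [cov]
  rw [← hmf, ← hmg]
  simp_rw [key]
  have h31 : Integrable (fun ω => (f ω + g ω - (mf + mg)) ^ 2 - (f ω - mf) ^ 2) μ := h3.sub h1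
  rw [integral_div, integral_sub h31 h2, integral_sub h3 h1,
    my_var_eq hf, my_var_eq hg, my_var_eq hfg, hmean]

end CovAux


/-- In the equivalent model where `b_B·X1` is replaced in distribution by
`(a_B·a_E/(a_E²+b_E²))·E + sqrt(b_B² − a_B²·a_E²/(a_E²+b_E²))·Z1` plus an independent
Gaussian term (so that `B = E'' + (a_B·b_E/(a_E²+b_E²))·F + (a_B·a_E/√(a_E²+b_E²))·Z2 + e_B`
with `F := b_E·A − a_E·X2`), the squared correlation coefficient between `E''` and `B`
equals `(v_Y + b_B²)/(a_B² + v_Y + b_B²)`, and `Var(E'') = Cov(E'', B) = v_Y + b_B²`. -/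
theorem stmt_5 {Ω : Type*} [MeasurableSpace Ω] (μ : Measure Ω) [IsProbabilityMeasure μ]
    (A X1 X2 Z1 Z2 Y : Ω → ℝ)
    (hA : Measurable A) (hX1 : Measurable X1) (hX2 : Measurable X2)
    (hZ1 : Measurable Z1) (hZ2 : Measurable Z2) (hY : Measurable Y)
    (hindep : iIndepFun ![A, X1, X2, Z1, Z2, Y] μ)
    (hAlaw : μ.map A = gaussianReal 0 1)
    (hX1law : μ.map X1 = gaussianReal 0 1)
    (hX2law : μ.map X2 = gaussianReal 0 1)
    (hZ1law : μ.map Z1 = gaussianReal 0 1)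
    (hZ2law : μ.map Z2 = gaussianReal 0 1)
    (v_Y : ℝ) (hv_Y : 0 < v_Y)
    (hYlaw : μ.map Y = gaussianReal 0 (Real.toNNReal v_Y))
    (a_B b_B a_E b_E e_B : ℝ)
    (ha_B : a_B ≠ 0) (hb_B : b_B ≠ 0) (ha_E : a_E ≠ 0) (hb_E : b_E ≠ 0)
    (hcond : b_B ^ 2 ≥ a_B ^ 2 * a_E ^ 2 / (a_E ^ 2 + b_E ^ 2))
    (E F E'' B : Ω → ℝ)
    (hE : E = fun ω => a_E * A ω + b_E * X2 ω)
    (hF : F = fun ω => b_E * A ω - a_E * X2 ω)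
    (hE'' : E'' = fun ω => (a_B * a_E / (a_E ^ 2 + b_E ^ 2)) * E ω + Y ω
      + Real.sqrt (b_B ^ 2 - a_B ^ 2 * a_E ^ 2 / (a_E ^ 2 + b_E ^ 2)) * Z1 ω)
    (hB : B = fun ω => E'' ω + (a_B * b_E / (a_E ^ 2 + b_E ^ 2)) * F ω
      + (a_B * a_E / Real.sqrt (a_E ^ 2 + b_E ^ 2)) * Z2 ω + e_B) :
    (cov E'' B μ) ^ 2 / (variance E'' μ * variance B μ)
      = (v_Y + b_B ^ 2) / (a_B ^ 2 + v_Y + b_B ^ 2)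
    ∧ variance E'' μ = v_Y + b_B ^ 2
    ∧ cov E'' B μ = v_Y + b_B ^ 2 := by
  have hS : (0 : ℝ) < a_E ^ 2 + b_E ^ 2 := by positivity
  have hSne : a_E ^ 2 + b_E ^ 2 ≠ 0 := hS.ne'
  have hsqS : Real.sqrt (a_E ^ 2 + b_E ^ 2) ≠ 0 := by
    positivity
  have hQ : (0 : ℝ) ≤ b_B ^ 2 - a_B ^ 2 * a_E ^ 2 / (a_E ^ 2 + b_E ^ 2) := by linarith
  set c3 : ℝ := Real.sqrt (b_B ^ 2 - a_B ^ 2 * a_E ^ 2 / (a_E ^ 2 + b_E ^ 2)) with hc3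
  set sS : ℝ := Real.sqrt (a_E ^ 2 + b_E ^ 2) with hsS
  have hc3sq : c3 ^ 2 = b_B ^ 2 - a_B ^ 2 * a_E ^ 2 / (a_E ^ 2 + b_E ^ 2) :=
    Real.sq_sqrt hQ
  have hsSsq : sS ^ 2 = a_E ^ 2 + b_E ^ 2 := Real.sq_sqrt hS.le
  set k : ℝ := a_B * a_E / (a_E ^ 2 + b_E ^ 2) with hk
  set m : ℝ := a_B * b_E / (a_E ^ 2 + b_E ^ 2) with hm
  set n : ℝ := a_B * a_E / sS with hn
  set R : Fin 6 → Ω → ℝ := ![A, X1, X2, Z1, Z2, Y] with hR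
  set V : Fin 6 → ℝ := ![1, 1, 1, 1, 1, v_Y] with hV
  have hvYne : Real.toNNReal v_Y ≠ 0 := by
    simp [Real.toNNReal_eq_zero, not_le, hv_Y]
  have hmem : ∀ i, MemLp (R i) 2 μ := by
    intro i
    fin_cases i
    · exact my_memℒp hA one_ne_zero hAlaw
    · exact my_memℒp hX1 one_ne_zero hX1law
    · exact my_memℒp hX2 one_ne_zero hX2law
    · exact my_memℒp hZ1 one_ne_zero hZ1law
    · exact my_memℒp hZ2 one_ne_zero hZ2law
    · exact my_memℒp hY hvYne hYlaw
  have hvar : ∀ i, variance (R i) μ = V i := by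
    intro i
    fin_cases i
    · simpa [hR, hV] using my_var hA one_ne_zero hAlaw
    · simpa [hR, hV] using my_var hX1 one_ne_zero hX1law
    · simpa [hR, hV] using my_var hX2 one_ne_zero hX2law
    · simpa [hR, hV] using my_var hZ1 one_ne_zero hZ1law
    · simpa [hR, hV] using my_var hZ2 one_ne_zero hZ2law
    · simpa [hR, hV, Real.coe_toNNReal v_Y hv_Y.le] using my_var hY hvYne hYlaw
  have hcomb_mem : ∀ d : Fin 6 → ℝ, MemLp (fun ω => ∑ i, d i * R i ω) 2 μ := by
    intro d
    have hsum : (fun ω => ∑ i, d i * R i ω)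
        = ∑ i ∈ Finset.univ, fun ω => d i * R i ω := by
      ext ω
      rw [Finset.sum_apply]
    rw [hsum]
    exact memLp_finset_sum' _ fun i _ => (hmem i).const_mul _
  have hcomb_var : ∀ d : Fin 6 → ℝ,
      variance (fun ω => ∑ i, d i * R i ω) μ = ∑ i, d i ^ 2 * V i := by
    intro d
    have hsum : (fun ω => ∑ i, d i * R i ω)
        = ∑ i ∈ Finset.univ, fun ω => d i * R i ω := by
      ext ω
      rw [Finset.sum_apply]
    rw [hsum, IndepFun.variance_sum (fun i _ => (hmem i).const_mul _)
      (fun i _ j _ hij => (hindep.indepFun hij).comp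
        (measurable_const_mul (d i)) (measurable_const_mul (d j)))]
    exact Finset.sum_congr rfl fun i _ => by rw [variance_const_mul, hvar i]
  -- coefficient vectors
  set dE : Fin 6 → ℝ := ![k * a_E, 0, k * b_E, c3, 0, 1] with hdE
  set dB : Fin 6 → ℝ := ![a_B, 0, 0, c3, n, 1] with hdB
  set dT : Fin 6 → ℝ := ![k * a_E + a_B, 0, k * b_E, 2 * c3, n, 2] with hdT
  have hE''eq : E'' = fun ω => ∑ i, dE i * R i ω := by
    funext ω
    simp only [hE'', hE, hdE, hR, Fin.sum_univ_six, Matrix.cons_val_zero, Matrix.cons_val_one,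
      Matrix.head_cons, Matrix.cons_val_two, Matrix.tail_cons, Matrix.cons_val_three,
      Matrix.cons_val_four, show (5 : Fin 6) = Fin.succ 4 from rfl, Matrix.cons_val_succ,
      ← hc3, ← hk]
    ring
  have hBeq : B = fun ω => (∑ i, dB i * R i ω) + e_B := by
    funext ω
    simp only [hB, hE'', hE, hF, hdB, hR, Fin.sum_univ_six, Matrix.cons_val_zero,
      Matrix.cons_val_one, Matrix.head_cons, Matrix.cons_val_two, Matrix.tail_cons,
      Matrix.cons_val_three, Matrix.cons_val_four, show (5 : Fin 6) = Fin.succ 4 from rfl,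
      Matrix.cons_val_succ, ← hc3, ← hk, ← hm, ← hn, ← hsS]
    rw [hk, hm]
    field_simp
    ring
  have hTeq : (fun ω => E'' ω + B ω) = fun ω => (∑ i, dT i * R i ω) + e_B := by
    funext ω
    rw [hE''eq, hBeq]
    simp only [hdE, hdB, hdT, Fin.sum_univ_six, Matrix.cons_val_zero, Matrix.cons_val_one,
      Matrix.head_cons, Matrix.cons_val_two, Matrix.tail_cons, Matrix.cons_val_three,
      Matrix.cons_val_four, show (5 : Fin 6) = Fin.succ 4 from rfl, Matrix.cons_val_succ]
    ring
  have hsum_dE : ∑ i, dE i ^ 2 * V i = v_Y + b_B ^ 2 := by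
    simp only [hdE, hV, Fin.sum_univ_six, Matrix.cons_val_zero, Matrix.cons_val_one,
      Matrix.head_cons, Matrix.cons_val_two, Matrix.tail_cons, Matrix.cons_val_three,
      Matrix.cons_val_four, show (5 : Fin 6) = Fin.succ 4 from rfl, Matrix.cons_val_succ]
    rw [hc3sq, hk]
    field_simp
    ring
  have hsum_dB : ∑ i, dB i ^ 2 * V i = a_B ^ 2 + v_Y + b_B ^ 2 := by
    simp only [hdB, hV, Fin.sum_univ_six, Matrix.cons_val_zero, Matrix.cons_val_one,
      Matrix.head_cons, Matrix.cons_val_two, Matrix.tail_cons, Matrix.cons_val_three,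
      Matrix.cons_val_four, show (5 : Fin 6) = Fin.succ 4 from rfl, Matrix.cons_val_succ]
    rw [hc3sq, hn, div_pow, hsSsq]
    field_simp
    ring
  have hsum_dT : ∑ i, dT i ^ 2 * V i = a_B ^ 2 + 4 * b_B ^ 2 + 4 * v_Y := by
    simp only [hdT, hV, Fin.sum_univ_six, Matrix.cons_val_zero, Matrix.cons_val_one,
      Matrix.head_cons, Matrix.cons_val_two, Matrix.tail_cons, Matrix.cons_val_three,
      Matrix.cons_val_four, show (5 : Fin 6) = Fin.succ 4 from rfl, Matrix.cons_val_succ]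
    rw [show (2 * c3) ^ 2 = 4 * c3 ^ 2 from by ring, hc3sq, hn, div_pow, hsSsq, hk]
    field_simp
    ring
  have hmemE'' : MemLp E'' 2 μ := by
    rw [hE''eq]; exact hcomb_mem dE
  have hmemB : MemLp B 2 μ := by
    rw [hBeq]
    exact (hcomb_mem dB).add (memLp_const e_B)
  have hvarE'' : variance E'' μ = v_Y + b_B ^ 2 := by
    rw [hE''eq, hcomb_var dE, hsum_dE]
  have hvarB : variance B μ = a_B ^ 2 + v_Y + b_B ^ 2 := by
    rw [hBeq, my_variance_add_const (hcomb_mem dB) e_B, hcomb_var dB, hsum_dB]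
  have hvarT : variance (fun ω => E'' ω + B ω) μ = a_B ^ 2 + 4 * b_B ^ 2 + 4 * v_Y := by
    rw [hTeq, my_variance_add_const (hcomb_mem dT) e_B, hcomb_var dT, hsum_dT]
  have hcov : cov E'' B μ = v_Y + b_B ^ 2 := by
    rw [my_cov_eq hmemE'' hmemB, hvarT, hvarE'', hvarB]
    ring
  have hpos : (0 : ℝ) < v_Y + b_B ^ 2 := add_pos_of_pos_of_nonneg hv_Y (sq_nonneg _)
  refine ⟨?_, hvarE'', hcov⟩
  rw [hcov, hvarE'', hvarB, pow_two]
  exact mul_div_mul_left _ _ hpos.ne'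
end

section
/- Let Φ denote the cumulative distribution function of the standard Gaussian distribution, let v > 0, and let P be a probability density function on ℝ. Define φ[P,v](t) := log₂ ∫_{-∞}^{∞} ( Φ(x/√v)^{1/(1−t)} + (1 − Φ(x/√v))^{1/(1−t)} )^{1−t} P(x) dx. Then the function t ↦ φ[P,v](t) is convex on the interval (0,1). -/
open MeasureTheory Real

noncomputable def stdGaussianCDF (x : ℝ) : ℝ :=
  ∫ u in Set.Iic x, (1 / Real.sqrt (2 * Real.pi)) * Real.exp (-u ^ 2 / 2)

lemma gauss_integrable :
    Integrable (fun u : ℝ => (1 / Real.sqrt (2 * Real.pi)) * Real.exp (-u ^ 2 / 2)) := by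
  have h : Integrable (fun u : ℝ => Real.exp (-(1/2 : ℝ) * u ^ 2)) :=
    integrable_exp_neg_mul_sq (by norm_num)
  have h2 := h.const_mul (1 / Real.sqrt (2 * Real.pi))
  convert h2 using 2 with u
  ring_nf

lemma gauss_total :
    ∫ u : ℝ, (1 / Real.sqrt (2 * Real.pi)) * Real.exp (-u ^ 2 / 2) = 1 := by
  rw [integral_const_mul]
  have h : (fun u : ℝ => Real.exp (-u ^ 2 / 2)) = fun u : ℝ => Real.exp (-(1/2 : ℝ) * u ^ 2) := by
    funext u; ring_nf
  rw [h, integral_gaussian, show Real.pi / (1/2 : ℝ) = 2 * Real.pi by ring]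
  rw [one_div, inv_mul_cancel₀]
  positivity

lemma cdf_nonneg (x : ℝ) : 0 ≤ stdGaussianCDF x :=
  setIntegral_nonneg measurableSet_Iic fun u _ => by positivity

lemma cdf_le_one (x : ℝ) : stdGaussianCDF x ≤ 1 := by
  rw [← gauss_total]
  exact setIntegral_le_integral gauss_integrable
    (Filter.Eventually.of_forall fun u => by positivity)

lemma cdf_mono : Monotone stdGaussianCDF := fun x y hxy =>
  setIntegral_mono_set gauss_integrable.integrableOn
    (Filter.Eventually.of_forall fun u => by positivity)
    (HasSubset.Subset.eventuallyLE (Set.Iic_subset_Iic.2 hxy))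

lemma cdf_meas : Measurable stdGaussianCDF := cdf_mono.measurable



lemma term_le {c d s : ℝ} (hc : 0 ≤ c) (hd : 0 ≤ d) (hs : 0 < s) :
    c ≤ (c ^ (1/s) + d ^ (1/s)) ^ s := by
  have h1 : (c ^ (1/s)) ^ s ≤ (c ^ (1/s) + d ^ (1/s)) ^ s :=
    Real.rpow_le_rpow (Real.rpow_nonneg hc _)
      (le_add_of_nonneg_right (Real.rpow_nonneg hd _)) hs.le
  rwa [← Real.rpow_mul hc, one_div_mul_cancel hs.ne', Real.rpow_one] at h1

lemma pnorm_lb {a s : ℝ} (ha0 : 0 ≤ a) (ha1 : a ≤ 1) (hs : 0 < s) :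
    1/2 ≤ (a ^ (1/s) + (1 - a) ^ (1/s)) ^ s := by
  rcases le_total a (1/2) with h | h
  · have := term_le (c := 1 - a) (d := a) (by linarith) ha0 hs
    rw [add_comm] at this; linarith
  · have := term_le (c := a) (d := 1 - a) ha0 (by linarith) hs
    linarith

lemma pnorm_ub {a s : ℝ} (ha0 : 0 ≤ a) (ha1 : a ≤ 1) (hs : 0 < s) (hs1 : s ≤ 1) :
    (a ^ (1/s) + (1 - a) ^ (1/s)) ^ s ≤ 1 := by
  have key : ∀ c : ℝ, 0 ≤ c → c ≤ 1 → c ^ (1/s) ≤ c := by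
    intro c hc0 hc1
    rcases hc0.eq_or_lt with h | h
    · rw [← h, Real.zero_rpow (by positivity)]
    · calc c ^ (1/s) ≤ c ^ (1:ℝ) :=
            Real.rpow_le_rpow_of_exponent_ge h hc1 (by rw [le_div_iff₀ hs]; linarith)
        _ = c := Real.rpow_one c
  have h1 := key a ha0 ha1
  have h2 := key (1 - a) (by linarith) (by linarith)
  exact Real.rpow_le_one
    (add_nonneg (Real.rpow_nonneg ha0 _) (Real.rpow_nonneg (by linarith) _))
    (by linarith) hs.le

lemma interp_pointwise {a b s0 s1 w1 w2 : ℝ} (ha0 : 0 ≤ a) (hb0 : 0 ≤ b)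
    (hs0 : 0 < s0) (hs1 : 0 < s1) (hw1 : 0 < w1) (hw2 : 0 < w2) (hw : w1 + w2 = 1) :
    (a ^ (1/(w1*s0 + w2*s1)) + b ^ (1/(w1*s0 + w2*s1))) ^ (w1*s0 + w2*s1) ≤
      ((a ^ (1/s0) + b ^ (1/s0)) ^ s0) ^ w1 * ((a ^ (1/s1) + b ^ (1/s1)) ^ s1) ^ w2 := by
  set s : ℝ := w1*s0 + w2*s1 with hs_def
  have hs : 0 < s := by positivity
  set p : ℝ := s / (w1 * s0) with hp_def
  set q : ℝ := s / (w2 * s1) with hq_def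
  have hpq : Real.HolderConjugate p q := by
    rw [Real.holderConjugate_iff]; constructor
    · rw [hp_def, lt_div_iff₀ (by positivity)]
      nlinarith
    · rw [hp_def, hq_def]
      field_simp
      exact hs_def.symm
  have hHolder := Real.inner_le_Lp_mul_Lq_of_nonneg (s := (Finset.univ : Finset (Fin 2)))
    (f := ![a ^ (w1/s), b ^ (w1/s)]) (g := ![a ^ (w2/s), b ^ (w2/s)]) hpq
    (fun i _ => by fin_cases i <;> simp <;> positivity)
    (fun i _ => by fin_cases i <;> simp <;> positivity)
  rw [Fin.sum_univ_two, Fin.sum_univ_two, Fin.sum_univ_two] at hHolder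
  simp only [Matrix.cons_val_zero, Matrix.cons_val_one, Matrix.head_cons] at hHolder
  have hmul : ∀ c : ℝ, 0 ≤ c → c ^ (w1/s) * c ^ (w2/s) = c ^ (1/s) := by
    intro c hc
    rw [← Real.rpow_add' hc (by positivity), ← add_div, hw]
  have hppow : ∀ c : ℝ, 0 ≤ c → (c ^ (w1/s)) ^ p = c ^ (1/s0) := by
    intro c hc
    rw [← Real.rpow_mul hc]
    congr 1
    rw [hp_def]
    field_simp
  have hqpow : ∀ c : ℝ, 0 ≤ c → (c ^ (w2/s)) ^ q = c ^ (1/s1) := by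
    intro c hc
    rw [← Real.rpow_mul hc]
    congr 1
    rw [hq_def]
    field_simp
  have hpinv : 1 / p = w1 * s0 / s := by rw [hp_def, one_div_div]
  have hqinv : 1 / q = w2 * s1 / s := by rw [hq_def, one_div_div]
  rw [hmul a ha0, hmul b hb0, hppow a ha0, hppow b hb0, hqpow a ha0, hqpow b hb0,
    hpinv, hqinv] at hHolder
  have hX0 : 0 ≤ a ^ (1/s0) + b ^ (1/s0) := by positivity
  have hY0 : 0 ≤ a ^ (1/s1) + b ^ (1/s1) := by positivity
  calc (a ^ (1/s) + b ^ (1/s)) ^ s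
      ≤ ((a ^ (1/s0) + b ^ (1/s0)) ^ (w1*s0/s) * (a ^ (1/s1) + b ^ (1/s1)) ^ (w2*s1/s)) ^ s :=
        Real.rpow_le_rpow (by positivity) hHolder hs.le
    _ = ((a ^ (1/s0) + b ^ (1/s0)) ^ (w1*s0/s)) ^ s * ((a ^ (1/s1) + b ^ (1/s1)) ^ (w2*s1/s)) ^ s :=
        Real.mul_rpow (Real.rpow_nonneg hX0 _) (Real.rpow_nonneg hY0 _)
    _ = ((a ^ (1/s0) + b ^ (1/s0)) ^ s0) ^ w1 * ((a ^ (1/s1) + b ^ (1/s1)) ^ s1) ^ w2 := by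
        rw [← Real.rpow_mul hX0, ← Real.rpow_mul hY0,
          div_mul_cancel₀ _ hs.ne', div_mul_cancel₀ _ hs.ne',
          mul_comm w1 s0, mul_comm w2 s1, Real.rpow_mul hX0, Real.rpow_mul hY0]

/-- The function `φ[P,v]` from the security analysis. -/
noncomputable def phiFn (P : ℝ → ℝ) (v : ℝ) (t : ℝ) : ℝ :=
  Real.logb 2 (∫ x, (stdGaussianCDF (x / Real.sqrt v) ^ (1 / (1 - t))
    + (1 - stdGaussianCDF (x / Real.sqrt v)) ^ (1 / (1 - t))) ^ (1 - t) * P x)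

/-- `t ↦ φ[P,v](t)` is convex on `(0,1)`. -/
theorem stmt_6 (v : ℝ) (hv : 0 < v) (P : ℝ → ℝ)
    (hP_nonneg : ∀ x, 0 ≤ P x) (hP_meas : Measurable P)
    (hP_int : Integrable P) (hP_one : ∫ x, P x = 1)
    (hInt : ∀ t ∈ Set.Ioo (0 : ℝ) 1,
      Integrable (fun x => (stdGaussianCDF (x / Real.sqrt v) ^ (1 / (1 - t))
        + (1 - stdGaussianCDF (x / Real.sqrt v)) ^ (1 / (1 - t))) ^ (1 - t) * P x)) :
    ConvexOn ℝ (Set.Ioo (0 : ℝ) 1) (phiFn P v) := by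
  set F : ℝ → ℝ → ℝ := fun t x => (stdGaussianCDF (x / Real.sqrt v) ^ (1 / (1 - t))
    + (1 - stdGaussianCDF (x / Real.sqrt v)) ^ (1 / (1 - t))) ^ (1 - t) with hF_def
  set I : ℝ → ℝ := fun t => ∫ x, F t x * P x with hI_def
  have hInt' : ∀ t ∈ Set.Ioo (0:ℝ) 1, Integrable (fun x => F t x * P x) := hInt
  have hphi : ∀ t, phiFn P v t = Real.logb 2 (I t) := fun t => rfl
  have hΦ0 : ∀ x : ℝ, 0 ≤ stdGaussianCDF (x / Real.sqrt v) := fun x => cdf_nonneg _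
  have hΦ1 : ∀ x : ℝ, stdGaussianCDF (x / Real.sqrt v) ≤ 1 := fun x => cdf_le_one _
  have hF_lb : ∀ t ∈ Set.Ioo (0:ℝ) 1, ∀ x, 1/2 ≤ F t x := fun t ht x =>
    pnorm_lb (hΦ0 x) (hΦ1 x) (by linarith [ht.2])
  have hF_nonneg : ∀ t ∈ Set.Ioo (0:ℝ) 1, ∀ x, 0 ≤ F t x := fun t ht x => by
    linarith [hF_lb t ht x]
  have hF_ub : ∀ t ∈ Set.Ioo (0:ℝ) 1, ∀ x, F t x ≤ 1 := fun t ht x =>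
    pnorm_ub (hΦ0 x) (hΦ1 x) (by linarith [ht.2]) (by linarith [ht.1])
  have hcdf := cdf_meas
  have hF_meas : ∀ t, Measurable (F t) := fun t => by
    simp only [hF_def]; fun_prop
  have hI_lb : ∀ t ∈ Set.Ioo (0:ℝ) 1, 1/2 ≤ I t := by
    intro t ht
    have h1 : ∫ x, (1/2 : ℝ) * P x ≤ ∫ x, F t x * P x :=
      integral_mono (hP_int.const_mul _) (hInt' t ht)
        (fun x => mul_le_mul_of_nonneg_right (hF_lb t ht x) (hP_nonneg x))
    rwa [integral_const_mul, hP_one, mul_one] at h1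
  have hI_pos : ∀ t ∈ Set.Ioo (0:ℝ) 1, 0 < I t := fun t ht => by linarith [hI_lb t ht]
  -- key log-convexity inequality
  have key : ∀ t0 ∈ Set.Ioo (0:ℝ) 1, ∀ t1 ∈ Set.Ioo (0:ℝ) 1, ∀ w1 w2 : ℝ, 0 < w1 → 0 < w2 →
      w1 + w2 = 1 → I (w1*t0 + w2*t1) ≤ I t0 ^ w1 * I t1 ^ w2 := by
    intro t0 ht0 t1 ht1 w1 w2 hw1 hw2 hw
    have ht : w1*t0 + w2*t1 ∈ Set.Ioo (0:ℝ) 1 :=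
      ⟨by nlinarith [ht0.1, ht1.1], by nlinarith [ht0.2, ht1.2]⟩
    -- pointwise interpolation
    have hpt : ∀ x, F (w1*t0+w2*t1) x ≤ (F t0 x) ^ w1 * (F t1 x) ^ w2 := by
      intro x
      have h := interp_pointwise (a := stdGaussianCDF (x / Real.sqrt v))
        (b := 1 - stdGaussianCDF (x / Real.sqrt v)) (s0 := 1 - t0) (s1 := 1 - t1)
        (hΦ0 x) (by linarith [hΦ1 x]) (by linarith [ht0.2]) (by linarith [ht1.2]) hw1 hw2 hw
      simp only [hF_def]
      rw [show (1 : ℝ) - (w1*t0+w2*t1) = w1*(1-t0) + w2*(1-t1) by linear_combination -hw]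
      exact h
    -- RHS of step A is integrable
    have hRmeas : Measurable (fun x => (F t0 x)^w1 * (F t1 x)^w2 * P x) := by
      simp only [hF_def]; fun_prop
    have hRb : ∀ x, (F t0 x)^w1 * (F t1 x)^w2 ≤ 1 := by
      intro x
      have h1 : (F t0 x)^w1 ≤ 1 := Real.rpow_le_one (hF_nonneg t0 ht0 x) (hF_ub t0 ht0 x) hw1.le
      have h2 : (F t1 x)^w2 ≤ 1 := Real.rpow_le_one (hF_nonneg t1 ht1 x) (hF_ub t1 ht1 x) hw2.le
      have h3 : 0 ≤ (F t0 x)^w1 := Real.rpow_nonneg (hF_nonneg t0 ht0 x) _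
      have h4 : 0 ≤ (F t1 x)^w2 := Real.rpow_nonneg (hF_nonneg t1 ht1 x) _
      nlinarith
    have hRnn : ∀ x, 0 ≤ (F t0 x)^w1 * (F t1 x)^w2 := fun x =>
      mul_nonneg (Real.rpow_nonneg (hF_nonneg t0 ht0 x) _) (Real.rpow_nonneg (hF_nonneg t1 ht1 x) _)
    have hRble : Integrable (fun x => (F t0 x)^w1 * (F t1 x)^w2 * P x) := by
      refine Integrable.mono hP_int hRmeas.aestronglyMeasurable ?_
      refine Filter.Eventually.of_forall fun x => ?_
      rw [Real.norm_eq_abs, Real.norm_eq_abs,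
        abs_of_nonneg (mul_nonneg (hRnn x) (hP_nonneg x)), abs_of_nonneg (hP_nonneg x)]
      calc (F t0 x)^w1 * (F t1 x)^w2 * P x ≤ 1 * P x :=
            mul_le_mul_of_nonneg_right (hRb x) (hP_nonneg x)
        _ = P x := one_mul _
    have stepA : I (w1*t0+w2*t1) ≤ ∫ x, (F t0 x)^w1 * (F t1 x)^w2 * P x :=
      integral_mono (hInt' _ ht) hRble
        (fun x => mul_le_mul_of_nonneg_right (hpt x) (hP_nonneg x))
    -- step B: Hölder
    have h0nn : ∀ x, 0 ≤ F t0 x * P x := fun x => mul_nonneg (hF_nonneg t0 ht0 x) (hP_nonneg x)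
    have h1nn : ∀ x, 0 ≤ F t1 x * P x := fun x => mul_nonneg (hF_nonneg t1 ht1 x) (hP_nonneg x)
    have hmem : ∀ t ∈ Set.Ioo (0:ℝ) 1, ∀ w : ℝ, 0 < w →
        MemLp (fun x => (F t x * P x) ^ w) (ENNReal.ofReal (1/w)) volume := by
      intro t ht w hwpos
      have hint : Integrable (fun x => F t x * P x) := hInt' t ht
      have heq : (fun x => (F t x * P x) ^ w)
          = fun x => ‖F t x * P x‖ ^ (ENNReal.ofReal w).toReal := by
        funext x
        rw [ENNReal.toReal_ofReal hwpos.le,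
          Real.norm_of_nonneg (mul_nonneg (hF_nonneg t ht x) (hP_nonneg x))]
      rw [heq, show ENNReal.ofReal (1/w) = 1 / ENNReal.ofReal w by
        rw [one_div, one_div, ENNReal.ofReal_inv_of_pos hwpos]]
      exact (memLp_norm_rpow_iff hint.aestronglyMeasurable
        (by simp [ENNReal.ofReal_eq_zero, not_le, hwpos]) (by simp)).2
        (memLp_one_iff_integrable.2 hint)
    have hpq2 : (1/w1 : ℝ).HolderConjugate (1/w2) := by
      rw [Real.holderConjugate_iff]; constructor
      · rw [lt_div_iff₀ hw1]; linarith
      · rw [one_div, inv_inv, one_div, inv_inv]; exact hw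
    have hB := integral_mul_le_Lp_mul_Lq_of_nonneg hpq2
      (f := fun x => (F t0 x * P x) ^ w1) (g := fun x => (F t1 x * P x) ^ w2)
      (Filter.Eventually.of_forall fun x => Real.rpow_nonneg (h0nn x) _)
      (Filter.Eventually.of_forall fun x => Real.rpow_nonneg (h1nn x) _)
      (hmem t0 ht0 w1 hw1) (hmem t1 ht1 w2 hw2)
    have e0 : ∀ x, ((F t0 x * P x) ^ w1) ^ (1/w1 : ℝ) = F t0 x * P x := fun x => by
      rw [← Real.rpow_mul (h0nn x), mul_one_div_cancel hw1.ne', Real.rpow_one]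
    have e1 : ∀ x, ((F t1 x * P x) ^ w2) ^ (1/w2 : ℝ) = F t1 x * P x := fun x => by
      rw [← Real.rpow_mul (h1nn x), mul_one_div_cancel hw2.ne', Real.rpow_one]
    have e2 : ∀ x, (F t0 x * P x) ^ w1 * (F t1 x * P x) ^ w2
        = (F t0 x)^w1 * (F t1 x)^w2 * P x := by
      intro x
      rw [Real.mul_rpow (hF_nonneg t0 ht0 x) (hP_nonneg x),
        Real.mul_rpow (hF_nonneg t1 ht1 x) (hP_nonneg x)]
      have : P x ^ w1 * P x ^ w2 = P x := by
        rw [← Real.rpow_add' (hP_nonneg x) (by rw [hw]; norm_num), hw, Real.rpow_one]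
      calc (F t0 x)^w1 * P x ^ w1 * ((F t1 x)^w2 * P x ^ w2)
          = (F t0 x)^w1 * (F t1 x)^w2 * (P x ^ w1 * P x ^ w2) := by ring
        _ = (F t0 x)^w1 * (F t1 x)^w2 * P x := by rw [this]
    simp only [e0, e1, e2, one_div_one_div] at hB
    calc I (w1*t0+w2*t1) ≤ ∫ x, (F t0 x)^w1 * (F t1 x)^w2 * P x := stepA
      _ ≤ (∫ x, F t0 x * P x) ^ w1 * (∫ x, F t1 x * P x) ^ w2 := hB
      _ = I t0 ^ w1 * I t1 ^ w2 := rfl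
  -- assemble convexity
  refine ⟨convex_Ioo 0 1, fun t0 ht0 t1 ht1 w1 w2 hw1 hw2 hw => ?_⟩
  simp only [smul_eq_mul]
  rcases hw1.eq_or_lt with h1 | h1
  · rw [← h1] at hw ⊢
    simp only [zero_mul, zero_add, one_mul] at hw ⊢
    rw [hw]; simp
  rcases hw2.eq_or_lt with h2 | h2
  · rw [← h2] at hw ⊢
    simp only [add_zero, zero_mul, one_mul] at hw ⊢
    rw [hw]; simp
  have hk := key t0 ht0 t1 ht1 w1 w2 h1 h2 hw
  have ht : w1*t0 + w2*t1 ∈ Set.Ioo (0:ℝ) 1 :=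
    ⟨by nlinarith [ht0.1, ht1.1], by nlinarith [ht0.2, ht1.2]⟩
  have hlog := Real.log_le_log (hI_pos _ ht) hk
  rw [Real.log_mul (Real.rpow_pos_of_pos (hI_pos t0 ht0) w1).ne'
      (Real.rpow_pos_of_pos (hI_pos t1 ht1) w2).ne',
    Real.log_rpow (hI_pos t0 ht0), Real.log_rpow (hI_pos t1 ht1)] at hlog
  have h2pos : (0:ℝ) < Real.log 2 := Real.log_pos one_lt_two
  rw [hphi, hphi, hphi, Real.logb, Real.logb, Real.logb]
  rw [show w1 * (Real.log (I t0) / Real.log 2) + w2 * (Real.log (I t1) / Real.log 2)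
    = (w1 * Real.log (I t0) + w2 * Real.log (I t1)) / Real.log 2 by ring]
  exact div_le_div_of_nonneg_right hlog h2pos.le
end

section
/- Let Φ denote the standard Gaussian cumulative distribution function and for a > 0 define Φ_a(x) := Φ(x/a). If 0 < a < 1, then sup_x |Φ(x) − Φ_a(x)| = ∫_{a·c}^{c} (1/√(2π)) e^{−x²/2} dx, where c := sqrt(−2·log a/(1 − a²)) is the positive square root, so that c > a·c > 0. -/
open MeasureTheory Real

noncomputable def stdPhi (u : ℝ) : ℝ := (1 / Real.sqrt (2 * Real.pi)) * Real.exp (-u ^ 2 / 2)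

lemma stdPhi_cont : Continuous stdPhi := by
  unfold stdPhi; fun_prop

lemma stdPhi_nonneg (u : ℝ) : 0 ≤ stdPhi u := by
  unfold stdPhi
  positivity

lemma stdPhi_integrable : Integrable stdPhi := by
  have h := (integrable_exp_neg_mul_sq (by norm_num : (0:ℝ) < 1/2)).const_mul
    (1 / Real.sqrt (2 * Real.pi))
  refine h.congr (Filter.Eventually.of_forall fun u => ?_)
  unfold stdPhi
  ring_nf

lemma stdPhi_even (u : ℝ) : stdPhi (-u) = stdPhi u := by
  unfold stdPhi; ring_nf

lemma cdf_sub (x y : ℝ) :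
    stdGaussianCDF y - stdGaussianCDF x = ∫ u in x..y, stdPhi u :=
  intervalIntegral.integral_Iic_sub_Iic stdPhi_integrable.integrableOn
    stdPhi_integrable.integrableOn

/-- For `0 < a < 1`, the Kolmogorov distance between `Φ` and `Φ_a(x) = Φ(x/a)` equals
`∫_{a·c}^{c} (1/√(2π)) e^{−x²/2} dx` with `c = sqrt(−2·log a/(1 − a²))`. -/
theorem stmt_10 (a : ℝ) (ha : 0 < a) (ha1 : a < 1) :
    (⨆ x : ℝ, |stdGaussianCDF x - stdGaussianCDF (x / a)|)
      = ∫ x in (a * Real.sqrt (-(2 * Real.log a) / (1 - a ^ 2)))..(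
          Real.sqrt (-(2 * Real.log a) / (1 - a ^ 2))),
          (1 / Real.sqrt (2 * Real.pi)) * Real.exp (-x ^ 2 / 2) := by
  set c : ℝ := Real.sqrt (-(2 * Real.log a) / (1 - a ^ 2)) with hc
  set g : ℝ → ℝ := fun t => ∫ u in (a * t)..t, stdPhi u with hgdef
  have hcnn : 0 ≤ c := Real.sqrt_nonneg _
  have hla : Real.log a < 0 := Real.log_neg ha ha1
  have ha2 : 0 < 1 - a ^ 2 := by nlinarith
  have hcsq : c ^ 2 = -(2 * Real.log a) / (1 - a ^ 2) := by
    rw [hc, Real.sq_sqrt]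
    exact div_nonneg (by linarith) ha2.le
  -- derivative of g
  have hInt : ∀ x y : ℝ, IntervalIntegrable stdPhi volume x y := fun x y =>
    stdPhi_cont.intervalIntegrable x y
  have hF : ∀ t : ℝ, HasDerivAt (fun u => ∫ x in (0:ℝ)..u, stdPhi x) (stdPhi t) t := fun t =>
    intervalIntegral.integral_hasDerivAt_right (hInt 0 t)
      (stdPhi_cont.stronglyMeasurable.stronglyMeasurableAtFilter) stdPhi_cont.continuousAt
  have hgF : ∀ t : ℝ, g t = (∫ x in (0:ℝ)..t, stdPhi x) - ∫ x in (0:ℝ)..(a*t), stdPhi x := by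
    intro t
    rw [intervalIntegral.integral_interval_sub_left (hInt 0 t) (hInt 0 (a*t))]
  have hg' : ∀ t : ℝ, HasDerivAt g (stdPhi t - a * stdPhi (a * t)) t := by
    intro t
    have hlin : HasDerivAt (fun u : ℝ => a * u) a t := by
      simpa using (hasDerivAt_id t).const_mul a
    have h1 := (hF (a*t)).comp t hlin
    have h2 := (hF t).sub h1
    have : HasDerivAt (fun u => (∫ x in (0:ℝ)..u, stdPhi x) - ∫ x in (0:ℝ)..(a*u), stdPhi x)
        (stdPhi t - a * stdPhi (a*t)) t := by
      rw [show stdPhi t - a * stdPhi (a*t) = stdPhi t - stdPhi (a*t) * a by ring]; exact h2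
    exact this.congr_of_eventuallyEq (Filter.Eventually.of_forall fun u => (hgF u))
  -- sign of the derivative
  have hsign : ∀ t : ℝ, (t ^ 2 ≤ c ^ 2 → 0 ≤ stdPhi t - a * stdPhi (a * t)) ∧
      (c ^ 2 ≤ t ^ 2 → stdPhi t - a * stdPhi (a * t) ≤ 0) := by
    intro t
    have hsp : (0:ℝ) < 1 / Real.sqrt (2 * Real.pi) := by positivity
    have hrw : a * stdPhi (a*t)
        = (1 / Real.sqrt (2 * Real.pi)) * Real.exp (Real.log a + -(a*t)^2/2) := by
      unfold stdPhi
      rw [Real.exp_add, Real.exp_log ha]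
      ring
    constructor
    · intro h
      have h' : t ^ 2 ≤ -(2 * Real.log a) / (1 - a ^ 2) := hcsq ▸ h
      have ht2 : t ^ 2 * (1 - a ^ 2) ≤ -(2 * Real.log a) := (le_div_iff₀ ha2).mp h'
      have hexp : Real.exp (Real.log a + -(a*t)^2/2) ≤ Real.exp (-t^2/2) := by
        apply Real.exp_le_exp.mpr
        nlinarith
      rw [sub_nonneg, hrw]
      unfold stdPhi
      exact mul_le_mul_of_nonneg_left hexp hsp.le
    · intro h
      have h' : -(2 * Real.log a) / (1 - a ^ 2) ≤ t ^ 2 := hcsq ▸ h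
      have ht2 : -(2 * Real.log a) ≤ t ^ 2 * (1 - a ^ 2) := (div_le_iff₀ ha2).mp h'
      have hexp : Real.exp (-t^2/2) ≤ Real.exp (Real.log a + -(a*t)^2/2) := by
        apply Real.exp_le_exp.mpr
        nlinarith
      rw [sub_nonpos, hrw]
      unfold stdPhi
      exact mul_le_mul_of_nonneg_left hexp hsp.le
  have hgc : ContinuousOn g Set.univ := by
    intro t _
    exact (hg' t).continuousAt.continuousWithinAt
  -- g monotone on [0,c]
  have hmono : MonotoneOn g (Set.Icc 0 c) := by
    apply monotoneOn_of_deriv_nonneg (convex_Icc 0 c) (hgc.mono (Set.subset_univ _))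
    · exact fun t _ => ((hg' t).differentiableAt.differentiableWithinAt)
    · intro t ht
      rw [interior_Icc] at ht
      rw [(hg' t).deriv]
      exact (hsign t).1 (by nlinarith [ht.1, ht.2])
  have hanti : AntitoneOn g (Set.Ici c) := by
    apply antitoneOn_of_deriv_nonpos (convex_Ici c) (hgc.mono (Set.subset_univ _))
    · exact fun t _ => ((hg' t).differentiableAt.differentiableWithinAt)
    · intro t ht
      rw [interior_Ici] at ht
      rw [(hg' t).deriv]
      exact (hsign t).2 (by nlinarith [ht.out, hcnn])
  -- g nonneg for t ≥ 0
  have hgnn : ∀ t : ℝ, 0 ≤ t → 0 ≤ g t := by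
    intro t ht
    apply intervalIntegral.integral_nonneg (by nlinarith)
    exact fun u _ => stdPhi_nonneg u
  -- g odd
  have hgodd : ∀ t : ℝ, g (-t) = - g t := by
    intro t
    have h2 : g (-t) = ∫ u in (-(a*t))..(-t), stdPhi u := by
      rw [hgdef]; norm_num
    rw [h2, ← intervalIntegral.integral_comp_neg (f := stdPhi) (a := t) (b := a*t)]
    simp only [stdPhi_even]
    rw [hgdef]
    exact intervalIntegral.integral_symm (a*t) t
  -- bound : |g t| ≤ g c
  have hbd0 : ∀ t : ℝ, 0 ≤ t → g t ≤ g c := by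
    intro t ht
    rcases le_total t c with h | h
    · exact hmono ⟨ht, h⟩ ⟨hcnn, le_rfl⟩ h
    · exact hanti (Set.self_mem_Ici) h h
  have hbd : ∀ t : ℝ, |g t| ≤ g c := by
    intro t
    rcases le_total 0 t with ht | ht
    · rw [abs_of_nonneg (hgnn t ht)]; exact hbd0 t ht
    · have hneg : g t = - g (-t) := by
        have h := hgodd (-t); rw [neg_neg] at h; exact h
      rw [hneg, abs_neg, abs_of_nonneg (hgnn (-t) (by linarith))]
      exact hbd0 (-t) (by linarith)
  -- rewrite the difference of CDFs via g
  have hfg : ∀ x : ℝ, stdGaussianCDF x - stdGaussianCDF (x / a) = - g (x / a) := by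
    intro x
    have hx : a * (x / a) = x := by field_simp
    have : g (x / a) = ∫ u in x..(x / a), stdPhi u := by
      simp only [hgdef]; rw [hx]
    rw [this, ← intervalIntegral.integral_symm, ← cdf_sub]
  have hrhs : (∫ x in (a * c)..c, (1 / Real.sqrt (2 * Real.pi)) * Real.exp (-x ^ 2 / 2)) = g c :=
    rfl
  rw [hrhs]
  have hac : a * c / a = c := by field_simp
  apply le_antisymm
  · apply ciSup_le
    intro x
    rw [hfg x, abs_neg]
    exact hbd _
  · have hval : |stdGaussianCDF (a * c) - stdGaussianCDF (a * c / a)| = g c := by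
      rw [hfg (a * c), hac, abs_neg, abs_of_nonneg (hgnn c hcnn)]
    have hbdd : BddAbove (Set.range fun x : ℝ => |stdGaussianCDF x - stdGaussianCDF (x / a)|) := by
      refine ⟨g c, ?_⟩
      rintro y ⟨x, rfl⟩
      dsimp only
      rw [hfg x, abs_neg]
      exact hbd _
    calc g c = |stdGaussianCDF (a * c) - stdGaussianCDF (a * c / a)| := hval.symm
      _ ≤ ⨆ x : ℝ, |stdGaussianCDF x - stdGaussianCDF (x / a)| := le_ciSup hbdd (a * c)
end

section
/- Let Φ denote the standard Gaussian cumulative distribution function and for a > 0 define Φ_a(x) := Φ(x/a). If a > 1, then sup_x |Φ(x) − Φ_a(x)| = ∫_{c}^{a·c} (1/√(2π)) e^{−x²/2} dx, where c := sqrt(2·log a/(a² − 1)) > 0. -/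
open MeasureTheory Real

section Aux
open Set intervalIntegral
open MeasureTheory Real Set intervalIntegral

noncomputable def phi (u : ℝ) : ℝ := (1 / Real.sqrt (2 * Real.pi)) * Real.exp (-u ^ 2 / 2)

lemma phi_cont : Continuous phi := by
  unfold phi; fun_prop

lemma phi_nonneg (u : ℝ) : 0 ≤ phi u := by
  unfold phi; positivity

lemma phi_even (u : ℝ) : phi (-u) = phi u := by unfold phi; ring_nf

lemma phi_intOn (x : ℝ) : IntegrableOn phi (Iic x) := by
  have h : Integrable (fun u : ℝ => Real.exp (-(1/2 : ℝ) * u ^ 2)) :=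
    integrable_exp_neg_mul_sq (by norm_num)
  have : Integrable phi := by
    have := h.const_mul (1 / Real.sqrt (2 * Real.pi))
    refine this.congr ?_
    filter_upwards with u
    unfold phi; ring_nf
  exact this.integrableOn

lemma phi_ii (x y : ℝ) : IntervalIntegrable phi volume x y :=
  phi_cont.intervalIntegrable x y

noncomputable def G (x : ℝ) : ℝ := ∫ u in (0:ℝ)..x, phi u

lemma G_deriv (x : ℝ) : HasDerivAt G (phi x) x :=
  integral_hasDerivAt_right (phi_ii 0 x)
    (phi_cont.stronglyMeasurable.stronglyMeasurableAtFilter) phi_cont.continuousAt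

section main
variable (a : ℝ)

noncomputable def Fd (x : ℝ) : ℝ := ∫ u in (x/a)..x, phi u

lemma Fd_eq (x : ℝ) : Fd a x = G x - G (x/a) := by
  unfold Fd G
  rw [eq_sub_iff_add_eq, add_comm]
  exact integral_add_adjacent_intervals (phi_ii 0 (x/a)) (phi_ii (x/a) x)

lemma Fd_deriv (ha : 0 < a) (x : ℝ) :
    HasDerivAt (Fd a) (phi x - phi (x/a) * (1/a)) x := by
  have h1 : HasDerivAt (fun x : ℝ => G (x/a)) (phi (x/a) * (1/a)) x := by
    have := (G_deriv (x/a)).comp x ((hasDerivAt_id x).div_const a)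
    simpa [Function.comp_def] using this
  have := (G_deriv x).sub h1
  refine this.congr_of_eventuallyEq ?_
  filter_upwards with y
  exact Fd_eq a y

lemma Fd_symm (x : ℝ) : Fd a (-x) = -(Fd a x) := by
  unfold Fd
  have : ∀ p q : ℝ, (∫ u in p..q, phi u) = ∫ u in (-q)..(-p), phi u := by
    intro p q
    rw [← intervalIntegral.integral_comp_neg]
    simp only [phi_even]
  rw [neg_div, this (x/a) x, intervalIntegral.integral_symm]

end main

lemma deriv_sign_le (a : ℝ) (ha : 1 < a) (x : ℝ) (hx : 0 ≤ x)
    (hle : x ≤ a * Real.sqrt (2 * Real.log a / (a ^ 2 - 1))) :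
    0 ≤ phi x - phi (x/a) * (1/a) := by
  set c := Real.sqrt (2 * Real.log a / (a ^ 2 - 1)) with hc
  have ha0 : (0:ℝ) < a := lt_trans one_pos ha
  have hloga : 0 < Real.log a := Real.log_pos ha
  have ha2 : (0:ℝ) < a ^ 2 - 1 := by nlinarith
  have hc2 : c ^ 2 = 2 * Real.log a / (a ^ 2 - 1) := by
    apply Real.sq_sqrt; positivity
  have hca : c^2 * (a^2-1) = 2*Real.log a := by rw [hc2]; field_simp
  have ht : (x/a)^2 ≤ c^2 := by
    have h1 : x/a ≤ c := (div_le_iff₀ ha0).2 (by linarith)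
    have h2 : (0:ℝ) ≤ x/a := by positivity
    exact pow_le_pow_left₀ h2 h1 2
  have ht2 : (x/a)^2 * a^2 - (x/a)^2 ≤ 2 * Real.log a := by nlinarith [ht, hca, ha2]
  have hxa : x^2 = (x/a)^2 * a^2 := by field_simp
  have harg : -(x/a)^2/2 - Real.log a ≤ -x^2/2 := by rw [hxa]; linarith
  have hexp : Real.exp (-(x/a)^2/2 - Real.log a) ≤ Real.exp (-x^2/2) :=
    Real.exp_le_exp.2 harg
  have hkey : phi x - phi (x/a) * (1/a) = (1 / Real.sqrt (2 * Real.pi)) *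
      (Real.exp (-x^2/2) - Real.exp (-(x/a)^2/2 - Real.log a)) := by
    unfold phi
    rw [Real.exp_sub, Real.exp_log ha0]
    ring
  rw [hkey]
  have hs : 0 < Real.sqrt (2 * Real.pi) := Real.sqrt_pos.2 (by positivity)
  have := sub_nonneg.2 hexp
  positivity

lemma deriv_sign_ge (a : ℝ) (ha : 1 < a) (x : ℝ)
    (hge : a * Real.sqrt (2 * Real.log a / (a ^ 2 - 1)) ≤ x) :
    phi x - phi (x/a) * (1/a) ≤ 0 := by
  set c := Real.sqrt (2 * Real.log a / (a ^ 2 - 1)) with hc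
  have ha0 : (0:ℝ) < a := lt_trans one_pos ha
  have hloga : 0 < Real.log a := Real.log_pos ha
  have ha2 : (0:ℝ) < a ^ 2 - 1 := by nlinarith
  have hc0 : 0 ≤ c := Real.sqrt_nonneg _
  have hx : 0 ≤ x := le_trans (by positivity) hge
  have hc2 : c ^ 2 = 2 * Real.log a / (a ^ 2 - 1) := by
    apply Real.sq_sqrt; positivity
  have hca : c^2 * (a^2-1) = 2*Real.log a := by rw [hc2]; field_simp
  have ht : c^2 ≤ (x/a)^2 := by
    have h1 : c ≤ x/a := (le_div_iff₀ ha0).2 (by linarith)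
    exact pow_le_pow_left₀ hc0 h1 2
  have ht2 : 2 * Real.log a ≤ (x/a)^2 * a^2 - (x/a)^2 := by nlinarith [ht, hca, ha2]
  have hxa : x^2 = (x/a)^2 * a^2 := by field_simp
  have harg : -x^2/2 ≤ -(x/a)^2/2 - Real.log a := by rw [hxa]; linarith
  have hexp : Real.exp (-x^2/2) ≤ Real.exp (-(x/a)^2/2 - Real.log a) :=
    Real.exp_le_exp.2 harg
  have hkey : phi x - phi (x/a) * (1/a) = (1 / Real.sqrt (2 * Real.pi)) *
      (Real.exp (-x^2/2) - Real.exp (-(x/a)^2/2 - Real.log a)) := by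
    unfold phi
    rw [Real.exp_sub, Real.exp_log ha0]
    ring
  rw [hkey]
  have hs : 0 < Real.sqrt (2 * Real.pi) := Real.sqrt_pos.2 (by positivity)
  apply mul_nonpos_of_nonneg_of_nonpos (by positivity)
  linarith

lemma Fd_nonneg (a : ℝ) (ha : 1 < a) (x : ℝ) (hx : 0 ≤ x) : 0 ≤ Fd a x := by
  unfold Fd
  apply intervalIntegral.integral_nonneg
  · rw [div_le_iff₀ (by linarith : (0:ℝ) < a)]; nlinarith
  · intro u _; exact phi_nonneg u

lemma Fd_bound (a : ℝ) (ha : 1 < a) (x : ℝ) :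
    |Fd a x| ≤ Fd a (a * Real.sqrt (2 * Real.log a / (a ^ 2 - 1))) := by
  set c := Real.sqrt (2 * Real.log a / (a ^ 2 - 1)) with hc
  have ha0 : (0:ℝ) < a := lt_trans one_pos ha
  have hc0 : 0 ≤ c := Real.sqrt_nonneg _
  have hac0 : 0 ≤ a * c := by positivity
  have hmono : MonotoneOn (Fd a) (Set.Icc 0 (a*c)) := by
    apply monotoneOn_of_deriv_nonneg (convex_Icc _ _)
    · exact fun y _ => ((Fd_deriv a ha0 y).differentiableAt.continuousAt).continuousWithinAt
    · exact fun y _ => ((Fd_deriv a ha0 y).differentiableAt).differentiableWithinAt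
    · intro y hy
      rw [interior_Icc] at hy
      rw [(Fd_deriv a ha0 y).deriv]
      exact deriv_sign_le a ha y hy.1.le hy.2.le
  have hanti : AntitoneOn (Fd a) (Set.Ici (a*c)) := by
    apply antitoneOn_of_deriv_nonpos (convex_Ici _)
    · exact fun y _ => ((Fd_deriv a ha0 y).differentiableAt.continuousAt).continuousWithinAt
    · exact fun y _ => ((Fd_deriv a ha0 y).differentiableAt).differentiableWithinAt
    · intro y hy
      rw [interior_Ici] at hy
      rw [(Fd_deriv a ha0 y).deriv]
      exact deriv_sign_ge a ha y hy.le
  have hpos : ∀ y : ℝ, 0 ≤ y → Fd a y ≤ Fd a (a*c) := by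
    intro y hy
    rcases le_or_gt y (a*c) with h | h
    · exact hmono ⟨hy, h⟩ ⟨hac0, le_rfl⟩ h
    · exact hanti (Set.mem_Ici.2 le_rfl) (Set.mem_Ici.2 h.le) h.le
  rcases le_or_gt 0 x with hx | hx
  · rw [abs_of_nonneg (Fd_nonneg a ha x hx)]
    exact hpos x hx
  · have h1 : Fd a x = -(Fd a (-x)) := by rw [Fd_symm]; ring
    rw [h1, abs_neg, abs_of_nonneg (Fd_nonneg a ha (-x) (by linarith))]
    exact hpos (-x) (by linarith)


end Aux

open Set intervalIntegral in
/-- For `a > 1`, the Kolmogorov distance between `Φ` and `Φ_a(x) = Φ(x/a)` equals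
`∫_{c}^{a·c} (1/√(2π)) e^{−x²/2} dx` with `c = sqrt(2·log a/(a² − 1))`. -/
theorem stmt_11 (a : ℝ) (ha : 1 < a) :
    (⨆ x : ℝ, |stdGaussianCDF x - stdGaussianCDF (x / a)|)
      = ∫ x in (Real.sqrt (2 * Real.log a / (a ^ 2 - 1)))..(
          a * Real.sqrt (2 * Real.log a / (a ^ 2 - 1))),
          (1 / Real.sqrt (2 * Real.pi)) * Real.exp (-x ^ 2 / 2) := by
  set c := Real.sqrt (2 * Real.log a / (a ^ 2 - 1)) with hc
  have ha0 : (0:ℝ) < a := lt_trans one_pos ha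
  have hA : ∀ x : ℝ, stdGaussianCDF x - stdGaussianCDF (x/a) = Fd a x := by
    intro x
    have h1 : stdGaussianCDF x = ∫ u in Set.Iic x, phi u := rfl
    have h2 : stdGaussianCDF (x/a) = ∫ u in Set.Iic (x/a), phi u := rfl
    rw [h1, h2]
    exact intervalIntegral.integral_Iic_sub_Iic (phi_intOn _) (phi_intOn _)
  have htarget : (∫ x in c..(a*c), (1 / Real.sqrt (2 * Real.pi)) * Real.exp (-x ^ 2 / 2))
      = Fd a (a*c) := by
    unfold Fd phi
    rw [mul_div_cancel_left₀ c (ne_of_gt ha0)]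
  rw [htarget]
  have hbound : ∀ x : ℝ, |stdGaussianCDF x - stdGaussianCDF (x/a)| ≤ Fd a (a*c) := by
    intro x; rw [hA x]; exact Fd_bound a ha x
  apply le_antisymm
  · exact ciSup_le hbound
  · have hbdd : BddAbove (Set.range fun x : ℝ => |stdGaussianCDF x - stdGaussianCDF (x/a)|) := by
      refine ⟨Fd a (a*c), ?_⟩
      rintro _ ⟨x, rfl⟩
      exact hbound x
    have := le_ciSup hbdd (a*c)
    have hc0 : 0 ≤ c := Real.sqrt_nonneg _
    rwa [hA (a*c), abs_of_nonneg (Fd_nonneg a ha (a*c) (by positivity))] at this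
end

section
/- Let f : ℝ → ℝ be a nonnegative continuous function that is monotone decreasing (antitone) on (−∞, 0] and monotone increasing (monotone) on [0, ∞), with sup_x f(x) finite. Let P_X and P_{X'} be probability measures on ℝ with cumulative distribution functions F_X and F_{X'}, and suppose f is integrable with respect to both. Then |∫ f dP_X − ∫ f dP_{X'}| ≤ 2 · ( sup_x ( f(x) − f(0) ) ) · ( sup_x |F_X(x) − F_{X'}(x)| ). -/
open MeasureTheory

/-- The cumulative distribution function of a measure on `ℝ`. -/
noncomputable def cdfOf (μ : Measure ℝ) (x : ℝ) : ℝ := (μ (Set.Iic x)).toReal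

lemma open_lower_eq_Iio {S : Set ℝ} (hS : IsOpen S)
    (hlow : ∀ ⦃x y : ℝ⦄, x ∈ S → y ≤ x → y ∈ S) (hne : S.Nonempty) (hbdd : BddAbove S) :
    S = Set.Iio (sSup S) := by
  ext x
  constructor
  · intro hx
    rcases (le_csSup hbdd hx).lt_or_eq with h | h
    · exact h
    · exfalso
      obtain ⟨ε, hε, hball⟩ := Metric.isOpen_iff.1 hS x hx
      have hx2 : x + ε / 2 ∈ S := by
        apply hball
        simp only [Metric.mem_ball, Real.dist_eq]
        rw [abs_of_nonneg (by linarith)]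
        linarith
      have := le_csSup hbdd hx2
      rw [← h] at this
      linarith
  · intro hx
    obtain ⟨y, hyS, hxy⟩ := exists_lt_of_lt_csSup hne hx
    exact hlow hyS hxy.le

lemma open_upper_eq_Ioi {S : Set ℝ} (hS : IsOpen S)
    (hupp : ∀ ⦃x y : ℝ⦄, x ∈ S → x ≤ y → y ∈ S) (hne : S.Nonempty) (hbdd : BddBelow S) :
    S = Set.Ioi (sInf S) := by
  ext x
  constructor
  · intro hx
    rcases (csInf_le hbdd hx).lt_or_eq with h | h
    · exact h
    · exfalso
      obtain ⟨ε, hε, hball⟩ := Metric.isOpen_iff.1 hS x hx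
      have hx2 : x - ε / 2 ∈ S := by
        apply hball
        simp only [Metric.mem_ball, Real.dist_eq]
        rw [abs_of_nonpos (by linarith)]
        linarith
      have := csInf_le hbdd hx2
      rw [h] at this
      linarith
  · intro hx
    obtain ⟨y, hyS, hxy⟩ := exists_lt_of_csInf_lt hne hx
    exact hupp hyS hxy.le

lemma abs_meas_Iio_le (P P' : Measure ℝ) [IsProbabilityMeasure P] [IsProbabilityMeasure P']
    {D : ℝ} (hD : ∀ x, |(P (Set.Iic x)).toReal - (P' (Set.Iic x)).toReal| ≤ D) (a : ℝ) :
    |(P (Set.Iio a)).toReal - (P' (Set.Iio a)).toReal| ≤ D := by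
  set s : ℕ → Set ℝ := fun n => Set.Iic (a - 1 / (n + 1)) with hs
  have hmono : Monotone s := by
    intro m n hmn
    apply Set.Iic_subset_Iic.2
    have h1 : (1 : ℝ) / (n + 1) ≤ 1 / (m + 1) :=
      one_div_le_one_div_of_le (by positivity) (by exact_mod_cast Nat.succ_le_succ hmn)
    linarith
  have hU : ⋃ n, s n = Set.Iio a := by
    ext x
    simp only [Set.mem_iUnion, hs, Set.mem_Iic, Set.mem_Iio]
    constructor
    · rintro ⟨n, hn⟩
      have : (0 : ℝ) < 1 / (n + 1) := by positivity
      linarith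
    · intro hx
      obtain ⟨n, hn⟩ := exists_nat_one_div_lt (sub_pos.2 hx)
      exact ⟨n, by push_cast at hn ⊢; linarith⟩
  have h1 : Filter.Tendsto (fun n => (P (s n)).toReal) Filter.atTop
      (nhds (P (Set.Iio a)).toReal) := by
    have := tendsto_measure_iUnion_atTop (μ := P) hmono
    rw [hU] at this
    exact (ENNReal.tendsto_toReal (measure_ne_top P _)).comp this
  have h2 : Filter.Tendsto (fun n => (P' (s n)).toReal) Filter.atTop
      (nhds (P' (Set.Iio a)).toReal) := by
    have := tendsto_measure_iUnion_atTop (μ := P') hmono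
    rw [hU] at this
    exact (ENNReal.tendsto_toReal (measure_ne_top P' _)).comp this
  have h3 := (h1.sub h2).abs
  exact le_of_tendsto h3 (Filter.Eventually.of_forall fun n => hD _)

/-- For a nonnegative continuous `f`, decreasing on `(−∞,0]` and increasing on `[0,∞)` with
finite supremum, and probability measures `P_X`, `P_{X'}` with CDFs `F_X`, `F_{X'}`:
`|∫ f dP_X − ∫ f dP_{X'}| ≤ 2·sup_x (f(x) − f(0))·sup_x |F_X(x) − F_{X'}(x)|`. -/
theorem stmt_16 (f : ℝ → ℝ) (hf_nonneg : ∀ x, 0 ≤ f x) (hf_cont : Continuous f)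
    (hf_anti : AntitoneOn f (Set.Iic (0 : ℝ)))
    (hf_mono : MonotoneOn f (Set.Ici (0 : ℝ)))
    (hf_bdd : BddAbove (Set.range f))
    (P_X P_X' : Measure ℝ) [IsProbabilityMeasure P_X] [IsProbabilityMeasure P_X']
    (hf_int : Integrable f P_X) (hf_int' : Integrable f P_X') :
    |(∫ x, f x ∂P_X) - ∫ x, f x ∂P_X'|
      ≤ 2 * (⨆ x : ℝ, (f x - f 0)) * ⨆ x : ℝ, |cdfOf P_X x - cdfOf P_X' x| := by
  classical
  set D := ⨆ x : ℝ, |cdfOf P_X x - cdfOf P_X' x| with hD_def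
  -- basic facts about D
  have hto1 : ∀ (μ : Measure ℝ) [IsProbabilityMeasure μ] (s : Set ℝ), (μ s).toReal ≤ 1 := by
    intro μ _ s
    have : μ s ≤ 1 := prob_le_one
    simpa using ENNReal.toReal_mono (by simp) this
  have hbdd2 : BddAbove (Set.range fun x => |cdfOf P_X x - cdfOf P_X' x|) := by
    refine ⟨2, ?_⟩
    rintro _ ⟨x, rfl⟩
    have h1 := hto1 P_X (Set.Iic x)
    have h2 := hto1 P_X' (Set.Iic x)
    have h3 : (0:ℝ) ≤ (P_X (Set.Iic x)).toReal := ENNReal.toReal_nonneg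
    have h4 : (0:ℝ) ≤ (P_X' (Set.Iic x)).toReal := ENNReal.toReal_nonneg
    rw [abs_sub_le_iff]
    constructor <;> (simp only [cdfOf]; linarith)
  have hD_le : ∀ x, |cdfOf P_X x - cdfOf P_X' x| ≤ D := fun x => le_ciSup hbdd2 x
  have hD0 : 0 ≤ D := (abs_nonneg _).trans (hD_le 0)
  -- basic facts about M
  set M := ⨆ x : ℝ, (f x - f 0) with hM_def
  have hbddM : BddAbove (Set.range fun x => f x - f 0) := by
    obtain ⟨B, hB⟩ := hf_bdd
    refine ⟨B - f 0, ?_⟩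
    rintro _ ⟨x, rfl⟩
    have : f x ≤ B := hB ⟨x, rfl⟩
    show f x - f 0 ≤ B - f 0
    linarith
  have hM_le : ∀ x, f x - f 0 ≤ M := fun x => le_ciSup hbddM x
  have hM0 : 0 ≤ M := by simpa using hM_le 0
  have hf0min : ∀ x, f 0 ≤ f x := by
    intro x
    rcases le_total x 0 with h | h
    · exact hf_anti (Set.mem_Iic.2 h) (Set.mem_Iic.2 le_rfl) h
    · exact hf_mono (Set.mem_Ici.2 le_rfl) (Set.mem_Ici.2 h) h
  -- the key per-level bound
  have hkey : ∀ c : ℝ, f 0 < c →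
      |(P_X {x | c < f x}).toReal - (P_X' {x | c < f x}).toReal| ≤ 2 * D := by
    intro c hc
    set A := {x : ℝ | c < f x} with hA_def
    have hA_open : IsOpen A := isOpen_lt continuous_const hf_cont
    have h0A : (0 : ℝ) ∉ A := by simp [hA_def]; linarith
    set Am := A ∩ Set.Iio 0 with hAm_def
    set Ap := A ∩ Set.Ioi 0 with hAp_def
    have hsplit : A = Am ∪ Ap := by
      ext x
      simp only [hAm_def, hAp_def, Set.mem_union, Set.mem_inter_iff, Set.mem_Iio, Set.mem_Ioi]
      constructor
      · intro hx
        rcases lt_trichotomy x 0 with h | h | h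
        · exact Or.inl ⟨hx, h⟩
        · exact absurd (h ▸ hx) h0A
        · exact Or.inr ⟨hx, h⟩
      · rintro (⟨hx, _⟩ | ⟨hx, _⟩) <;> exact hx
    have hmeasm : MeasurableSet Am := hA_open.measurableSet.inter measurableSet_Iio
    have hmeasp : MeasurableSet Ap := hA_open.measurableSet.inter measurableSet_Ioi
    have hdisj : Disjoint Am Ap := by
      rw [Set.disjoint_left]
      rintro x ⟨_, h1⟩ ⟨_, h2⟩
      have h1' : x < 0 := h1
      have h2' : 0 < x := h2
      linarith
    have boundm : |(P_X Am).toReal - (P_X' Am).toReal| ≤ D := by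
      rcases Set.eq_empty_or_nonempty Am with h | hne
      · simpa [h] using hD0
      · have hopen : IsOpen Am := hA_open.inter isOpen_Iio
        have hlow : ∀ ⦃x y : ℝ⦄, x ∈ Am → y ≤ x → y ∈ Am := by
          rintro x y ⟨hxA, hx0⟩ hyx
          have hx0' : x < 0 := hx0
          refine ⟨?_, lt_of_le_of_lt hyx hx0'⟩
          have : f x ≤ f y := hf_anti (Set.mem_Iic.2 (by linarith : y ≤ 0))
            (Set.mem_Iic.2 hx0'.le) hyx
          exact lt_of_lt_of_le hxA this
        have hbdd : BddAbove Am := ⟨0, fun x hx => (hx.2 : x < 0).le⟩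
        rw [open_lower_eq_Iio hopen hlow hne hbdd]
        exact abs_meas_Iio_le P_X P_X' hD_le _
    have boundp : |(P_X Ap).toReal - (P_X' Ap).toReal| ≤ D := by
      rcases Set.eq_empty_or_nonempty Ap with h | hne
      · simpa [h] using hD0
      · have hopen : IsOpen Ap := hA_open.inter isOpen_Ioi
        have hupp : ∀ ⦃x y : ℝ⦄, x ∈ Ap → x ≤ y → y ∈ Ap := by
          rintro x y ⟨hxA, hx0⟩ hxy
          have hx0' : 0 < x := hx0
          refine ⟨?_, lt_of_lt_of_le hx0' hxy⟩
          have : f x ≤ f y := hf_mono (Set.mem_Ici.2 hx0'.le)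
            (Set.mem_Ici.2 (by linarith : (0:ℝ) ≤ y)) hxy
          exact lt_of_lt_of_le hxA this
        have hbdd : BddBelow Ap := ⟨0, fun x hx => (hx.2 : 0 < x).le⟩
        rw [open_upper_eq_Ioi hopen hupp hne hbdd]
        -- |P (Ioi b) - P' (Ioi b)| ≤ D
        set b := sInf Ap
        have hcompl : ∀ (μ : Measure ℝ) [IsProbabilityMeasure μ],
            (μ (Set.Ioi b)).toReal = 1 - (μ (Set.Iic b)).toReal := by
          intro μ _
          have : Set.Ioi b = (Set.Iic b)ᶜ := Set.compl_Iic.symm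
          rw [this, measure_compl measurableSet_Iic (measure_ne_top μ _)]
          rw [ENNReal.toReal_sub_of_le (measure_mono (Set.subset_univ _)) (measure_ne_top μ _)]
          simp
        rw [hcompl P_X, hcompl P_X']
        have := hD_le b
        rw [abs_sub_comm] at this
        simpa [cdfOf, sub_sub_cancel, abs_sub_comm] using
          (by rw [show (1 - (P_X (Set.Iic b)).toReal) - (1 - (P_X' (Set.Iic b)).toReal)
              = (P_X' (Set.Iic b)).toReal - (P_X (Set.Iic b)).toReal by ring]; exact this :
            |(1 - (P_X (Set.Iic b)).toReal) - (1 - (P_X' (Set.Iic b)).toReal)| ≤ D)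
    have hPA : (P_X A).toReal = (P_X Am).toReal + (P_X Ap).toReal := by
      rw [hsplit, measure_union hdisj hmeasp,
        ENNReal.toReal_add (measure_ne_top _ _) (measure_ne_top _ _)]
    have hPA' : (P_X' A).toReal = (P_X' Am).toReal + (P_X' Ap).toReal := by
      rw [hsplit, measure_union hdisj hmeasp,
        ENNReal.toReal_add (measure_ne_top _ _) (measure_ne_top _ _)]
    rw [hPA, hPA']
    calc |(P_X Am).toReal + (P_X Ap).toReal - ((P_X' Am).toReal + (P_X' Ap).toReal)|
        = |((P_X Am).toReal - (P_X' Am).toReal) + ((P_X Ap).toReal - (P_X' Ap).toReal)| := by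
          ring_nf
      _ ≤ |(P_X Am).toReal - (P_X' Am).toReal| + |(P_X Ap).toReal - (P_X' Ap).toReal| :=
          abs_add_le _ _
      _ ≤ 2 * D := by linarith
  -- layer cake
  set g := fun x => f x - f 0 with hg_def
  have hg_int : Integrable g P_X := hf_int.sub (integrable_const _)
  have hg_int' : Integrable g P_X' := hf_int'.sub (integrable_const _)
  have hg_nn : 0 ≤ᵐ[P_X] g := Filter.Eventually.of_forall fun x => sub_nonneg.2 (hf0min x)
  have hg_nn' : 0 ≤ᵐ[P_X'] g := Filter.Eventually.of_forall fun x => sub_nonneg.2 (hf0min x)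
  set u := fun t : ℝ => (P_X {a : ℝ | t < g a}).toReal with hu_def
  set v := fun t : ℝ => (P_X' {a : ℝ | t < g a}).toReal with hv_def
  have hlc : ∫ x, g x ∂P_X = ∫ t in Set.Ioi (0:ℝ), u t :=
    hg_int.integral_eq_integral_meas_lt hg_nn
  have hlc' : ∫ x, g x ∂P_X' = ∫ t in Set.Ioi (0:ℝ), v t :=
    hg_int'.integral_eq_integral_meas_lt hg_nn'
  -- reduce LHS to integrals of u, v
  have hIg : (∫ x, f x ∂P_X) - ∫ x, f x ∂P_X' = (∫ x, g x ∂P_X) - ∫ x, g x ∂P_X' := by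
    rw [integral_sub hf_int (integrable_const _), integral_sub hf_int' (integrable_const _)]
    simp
  -- antitonicity and measurability of u, v
  have hu_anti : Antitone u := by
    intro t t' h
    exact ENNReal.toReal_mono (measure_ne_top _ _)
      (measure_mono fun a ha => lt_of_le_of_lt h ha)
  have hv_anti : Antitone v := by
    intro t t' h
    exact ENNReal.toReal_mono (measure_ne_top _ _)
      (measure_mono fun a ha => lt_of_le_of_lt h ha)
  -- vanishing beyond M
  have hu_zero : ∀ t, M ≤ t → u t = 0 ∧ v t = 0 := by
    intro t ht
    have hempty : {a : ℝ | t < g a} = ∅ := by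
      ext a
      simp only [Set.mem_setOf_eq, Set.mem_empty_iff_false, iff_false, not_lt]
      exact (hM_le a).trans ht
    constructor <;> simp [hu_def, hv_def, hempty]
  -- the uniform bound on (0, ∞)
  have hbound : ∀ t ∈ Set.Ioi (0:ℝ),
      |u t - v t| ≤ Set.indicator (Set.Ioc 0 M) (fun _ => 2 * D) t := by
    intro t ht
    rcases le_or_gt t M with h | h
    · rw [Set.indicator_of_mem (Set.mem_Ioc.2 ⟨ht, h⟩)]
      have hset : {a : ℝ | t < g a} = {x : ℝ | f 0 + t < f x} := by
        ext a
        simp only [Set.mem_setOf_eq, hg_def]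
        constructor <;> intro <;> linarith
      rw [hu_def, hv_def]
      simp only
      rw [hset]
      exact hkey (f 0 + t) (by linarith [Set.mem_Ioi.1 ht])
    · rw [Set.indicator_of_notMem (by simp [Set.mem_Ioc]; intro; linarith)]
      obtain ⟨h1, h2⟩ := hu_zero t h.le
      simp [h1, h2]
  -- integrability of u and v on (0, ∞)
  have hind_int : Integrable (Set.indicator (Set.Ioc 0 M) (fun _ => 2 * D))
      (volume.restrict (Set.Ioi (0:ℝ))) := by
    rw [integrable_indicator_iff measurableSet_Ioc]
    exact integrableOn_const (by
      rw [Measure.restrict_apply measurableSet_Ioc]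
      exact (lt_of_le_of_lt (measure_mono Set.inter_subset_left)
        (by simp [Real.volume_Ioc])).ne)
  have hone_int : Integrable (Set.indicator (Set.Ioc 0 M) (fun _ => (1:ℝ)))
      (volume.restrict (Set.Ioi (0:ℝ))) := by
    rw [integrable_indicator_iff measurableSet_Ioc]
    exact integrableOn_const (by
      rw [Measure.restrict_apply measurableSet_Ioc]
      exact (lt_of_le_of_lt (measure_mono Set.inter_subset_left)
        (by simp [Real.volume_Ioc])).ne)
  have hu_int : Integrable u (volume.restrict (Set.Ioi (0:ℝ))) := by
    refine hone_int.mono' (hu_anti.measurable.aestronglyMeasurable) ?_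
    rw [ae_restrict_iff' measurableSet_Ioi]
    refine Filter.Eventually.of_forall fun t ht => ?_
    rcases le_or_gt t M with h | h
    · rw [Set.indicator_of_mem (Set.mem_Ioc.2 ⟨ht, h⟩), Real.norm_eq_abs,
        abs_of_nonneg ENNReal.toReal_nonneg]
      exact hto1 P_X _
    · rw [Set.indicator_of_notMem (by simp [Set.mem_Ioc]; intro; linarith)]
      rw [(hu_zero t h.le).1]
      simp
  have hv_int : Integrable v (volume.restrict (Set.Ioi (0:ℝ))) := by
    refine hone_int.mono' (hv_anti.measurable.aestronglyMeasurable) ?_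
    rw [ae_restrict_iff' measurableSet_Ioi]
    refine Filter.Eventually.of_forall fun t ht => ?_
    rcases le_or_gt t M with h | h
    · rw [Set.indicator_of_mem (Set.mem_Ioc.2 ⟨ht, h⟩), Real.norm_eq_abs,
        abs_of_nonneg ENNReal.toReal_nonneg]
      exact hto1 P_X' _
    · rw [Set.indicator_of_notMem (by simp [Set.mem_Ioc]; intro; linarith)]
      rw [(hu_zero t h.le).2]
      simp
  -- put it together
  rw [hIg, hlc, hlc', ← integral_sub hu_int hv_int]
  calc |∫ t in Set.Ioi (0:ℝ), (u t - v t)|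
      ≤ ∫ t in Set.Ioi (0:ℝ), |u t - v t| := by
        simpa using norm_integral_le_integral_norm (fun t => u t - v t)
    _ ≤ ∫ t in Set.Ioi (0:ℝ), Set.indicator (Set.Ioc 0 M) (fun _ => 2 * D) t := by
        refine integral_mono_of_nonneg (Filter.Eventually.of_forall fun t => abs_nonneg _)
          hind_int ?_
        exact (ae_restrict_iff' measurableSet_Ioi).2 (Filter.Eventually.of_forall hbound)
    _ = 2 * M * D := by
        rw [integral_indicator measurableSet_Ioc]
        rw [Measure.restrict_restrict measurableSet_Ioc,
          Set.inter_eq_self_of_subset_left (fun x hx => hx.1)]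
        rw [setIntegral_const]
        simp [Real.volume_Ioc, ENNReal.toReal_ofReal hM0]
        rw [max_eq_left hM0]
        ring
end

section
/- Let a < b be real numbers, let f : [a,b] → ℝ be continuous and monotone increasing (monotone) on [a,b], and let G : [a,b] → ℝ be continuously differentiable. Assume that max_{y ∈ [a,b]} (G(b) − G(y)) = G(b) − G(a). Then ∫_a^b f(x)·G'(x) dx ≤ f(b) · ∫_a^b G'(x) dx. -/
open MeasureTheory intervalIntegral

/-- If `f` is continuous and monotone increasing on `[a,b]`, `G` is continuously
differentiable on `[a,b]` with derivative `G'`, and the increment `G(b) − G(y)` is maximized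
at `y = a`, then `∫_a^b f·G' ≤ f(b)·∫_a^b G'`. -/
theorem stmt_18 (a b : ℝ) (hab : a < b) (f G G' : ℝ → ℝ)
    (hf_cont : ContinuousOn f (Set.Icc a b))
    (hf_mono : MonotoneOn f (Set.Icc a b))
    (hG : ∀ x ∈ Set.Icc a b, HasDerivAt G (G' x) x)
    (hG' : ContinuousOn G' (Set.Icc a b))
    (hmax : ∀ y ∈ Set.Icc a b, G b - G y ≤ G b - G a) :
    (∫ x in a..b, f x * G' x) ≤ f b * ∫ x in a..b, G' x := by
  have hab' : a ≤ b := hab.le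
  set p : ℝ → ℝ := fun x => min (max x a) b with hp
  have hpmem : ∀ x, p x ∈ Set.Icc a b := fun x =>
    ⟨le_min (le_max_right x a) hab', min_le_right _ _⟩
  have hpid : ∀ x ∈ Set.Icc a b, p x = x := fun x hx => by
    simp only [hp]
    rw [max_eq_left hx.1, min_eq_left hx.2]
  have hpcont : Continuous p := (continuous_id.max continuous_const).min continuous_const
  have hpmono : Monotone p := fun x y hxy =>
    min_le_min (max_le_max hxy le_rfl) le_rfl
  set F : ℝ → ℝ := fun x => f (p x) with hFdef
  have hFcont : Continuous F := hf_cont.comp_continuous hpcont hpmem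
  have hFmono : Monotone F := fun x y hxy => hf_mono (hpmem x) (hpmem y) (hpmono hxy)
  set g : ℝ → ℝ := fun x => G' (p x) with hgdef
  have hgcont : Continuous g := hG'.comp_continuous hpcont hpmem
  obtain ⟨C, hC⟩ : ∃ C, ∀ y ∈ Set.Icc a b, ‖G' y‖ ≤ C :=
    isCompact_Icc.exists_bound_of_continuousOn hG'
  have hgbound : ∀ x, ‖g x‖ ≤ C := fun x => hC _ (hpmem x)
  set S : StieltjesFunction ℝ := ⟨F, hFmono, fun x => hFcont.continuousAt.continuousWithinAt⟩
    with hSdef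
  set μ := S.measure with hμ
  have hSapp : ∀ x, S x = F x := fun x => rfl
  haveI hfin : IsFiniteMeasure μ := by
    constructor
    have hbot : Filter.Tendsto S Filter.atBot (nhds (f a)) := by
      refine tendsto_const_nhds.congr' ?_
      filter_upwards [Filter.eventually_le_atBot a] with x hx
      simp only [hSapp, hFdef, hp]
      rw [max_eq_right hx, min_eq_left hab']
    have htop : Filter.Tendsto S Filter.atTop (nhds (f b)) := by
      refine tendsto_const_nhds.congr' ?_
      filter_upwards [Filter.eventually_ge_atTop b] with x hx
      simp only [hSapp, hFdef, hp]
      rw [min_eq_right (hx.trans (le_max_left x a))]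
    rw [hμ, S.measure_univ hbot htop]
    exact ENNReal.ofReal_lt_top
  have hμIoc : ∀ x ∈ Set.Icc a b, (μ (Set.Ioc x b)).toReal = f b - f x := by
    intro x hx
    rw [hμ, S.measure_Ioc, ENNReal.toReal_ofReal (sub_nonneg.2 (hFmono hx.2))]
    simp only [hSapp, hFdef]
    rw [hpid x hx, hpid b ⟨hab', le_rfl⟩]
  -- interval integrabilities
  have huIcc : Set.uIcc a b = Set.Icc a b := Set.uIcc_of_le hab'
  have hint_g : IntervalIntegrable G' volume a b := by
    apply ContinuousOn.intervalIntegrable; rwa [huIcc]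
  have hint_fg : IntervalIntegrable (fun x => f x * G' x) volume a b := by
    apply ContinuousOn.intervalIntegrable; rw [huIcc]; exact hf_cont.mul hG'
  have hint_bg : IntervalIntegrable (fun x => f b * G' x) volume a b := hint_g.const_mul _
  rw [← sub_nonneg, ← intervalIntegral.integral_const_mul,
    ← intervalIntegral.integral_sub hint_bg hint_fg]
  -- the double integral
  set φ : ℝ → ℝ → ℝ := fun x t => (Set.Ioc x b).indicator (fun _ => g x) t with hφdef
  have hstep1 : (∫ x in a..b, (f b * G' x - f x * G' x)) =
      ∫ x in Set.Ioc a b, ∫ t, φ x t ∂μ := by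
    rw [intervalIntegral.integral_of_le hab']
    refine setIntegral_congr_fun measurableSet_Ioc fun x hx => ?_
    have hx' : x ∈ Set.Icc a b := ⟨hx.1.le, hx.2⟩
    simp only [hφdef]
    rw [integral_indicator_const _ measurableSet_Ioc, measureReal_def, hμIoc x hx', smul_eq_mul,
      hgdef]
    simp only [hpid x hx']
    ring
  have hSmeas : MeasurableSet {q : ℝ × ℝ | q.1 < q.2 ∧ q.2 ≤ b} :=
    (measurableSet_lt measurable_fst measurable_snd).inter
      (measurableSet_le measurable_snd measurable_const)
  have hφunc : Function.uncurry φ =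
      fun z : ℝ × ℝ => ({q : ℝ × ℝ | q.1 < q.2 ∧ q.2 ≤ b}).indicator (fun q => g q.1) z := by
    funext z
    rcases z with ⟨x, t⟩
    simp [hφdef, Function.uncurry, Set.indicator_apply, Set.mem_Ioc]
  haveI : IsFiniteMeasure (volume.restrict (Set.Ioc a b)) := by
    constructor
    rw [Measure.restrict_apply_univ]
    exact measure_Ioc_lt_top
  have hInt : Integrable (Function.uncurry φ) ((volume.restrict (Set.Ioc a b)).prod μ) := by
    refine Integrable.mono' (integrable_const C) ?_ (Filter.Eventually.of_forall fun z => ?_)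
    · rw [hφunc]
      exact (((hgcont.comp continuous_fst).stronglyMeasurable).indicator
        hSmeas).aestronglyMeasurable
    · rw [hφunc]
      calc ‖({q : ℝ × ℝ | q.1 < q.2 ∧ q.2 ≤ b}).indicator (fun q => g q.1) z‖
          ≤ ‖g z.1‖ := norm_indicator_le_norm_self _ _
        _ ≤ C := hgbound _
  have hswap : (∫ x in Set.Ioc a b, ∫ t, φ x t ∂μ) =
      ∫ t, (∫ x in Set.Ioc a b, φ x t) ∂μ := integral_integral_swap hInt
  rw [hstep1, hswap]
  refine integral_nonneg fun t => ?_
  rw [Pi.zero_apply]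
  by_cases ht : t ≤ b
  · have heq : ∀ x, φ x t = (Set.Iio t).indicator g x := fun x => by
      simp [hφdef, Set.indicator_apply, Set.mem_Ioc, Set.mem_Iio, ht]
    simp only [heq]
    rw [setIntegral_indicator measurableSet_Iio]
    have hset : Set.Ioc a b ∩ Set.Iio t = Set.Ioo a t := by
      ext x
      simp only [Set.mem_inter_iff, Set.mem_Ioc, Set.mem_Iio, Set.mem_Ioo]
      constructor
      · rintro ⟨⟨h1, _⟩, h2⟩; exact ⟨h1, h2⟩
      · rintro ⟨h1, h2⟩; exact ⟨⟨h1, h2.le.trans ht⟩, h2⟩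
    rw [hset]
    rcases le_or_gt t a with hta | hat
    · rw [Set.Ioo_eq_empty (by intro h; exact absurd (h.trans_le hta) (lt_irrefl a))]
      simp
    · rw [← integral_Ioc_eq_integral_Ioo,
        ← intervalIntegral.integral_of_le hat.le]
      have hftc : (∫ x in a..t, g x) = G t - G a := by
        refine intervalIntegral.integral_eq_sub_of_hasDerivAt (fun x hx => ?_)
          (hgcont.intervalIntegrable a t)
        rw [Set.uIcc_of_le hat.le] at hx
        have hx' : x ∈ Set.Icc a b := ⟨hx.1, hx.2.trans ht⟩
        show HasDerivAt G (G' (p x)) x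
        rw [hpid x hx']
        exact hG x hx'
      rw [hftc]
      have := hmax t ⟨hat.le, ht⟩
      linarith
  · have heq : ∀ x, φ x t = 0 := fun x => by
      simp [hφdef, Set.indicator_apply, Set.mem_Ioc, ht]
    simp [heq]
end
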